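/- arXiv:1310.2355 — 6 statements merged into one kernel-verified Lean document; each statement's English description precedes it below -/
import Mathlib

section
/- In any edge coloring of K_{2,t} with k colors that is a 3-rainbow coloring, the number t of vertices in the larger part satisfies t ≤ 2k². Consequently, rx₃(K_{2,t}) tends to infinity as t → ∞. -/
open SimpleGraph Finset

variable {V : Type*} {W : Type*}

/-- A rainbow tree in `G` w.r.t. coloring `c` containing `x, y, z`. -/
def SimpleGraph.RainbowTreeFor (G : SimpleGraph V) (c : Sym2 V → ℕ) (x y z : V) : Prop :=
  ∃ T : G.Subgraph, T.coe.IsTree ∧ x ∈ T.verts ∧ y ∈ T.verts ∧ z ∈ T.verts ∧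
    Set.InjOn c T.edgeSet

/-- `c` is a 3-rainbow coloring of `G` using colors `< k`. -/
def SimpleGraph.IsRainbow3Coloring (G : SimpleGraph V) (c : Sym2 V → ℕ) (k : ℕ) : Prop :=
  (∀ e ∈ G.edgeSet, c e < k) ∧ ∀ x y z : V, G.RainbowTreeFor c x y z

/-- The 3-rainbow index of `G`. -/
noncomputable def SimpleGraph.rx3 (G : SimpleGraph V) : ℕ :=
  sInf {k | ∃ c, G.IsRainbow3Coloring c k}

/-- `D` is a `k`-dominating set. -/
def SimpleGraph.IsKDominatingSet (G : SimpleGraph V) (k : ℕ) (D : Set V) : Prop :=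
  ∀ v ∉ D, k ≤ (G.neighborSet v ∩ D).ncard

/-- `D` is a connected `k`-dominating set. -/
def SimpleGraph.IsConnectedKDominatingSet (G : SimpleGraph V) (k : ℕ) (D : Set V) : Prop :=
  G.IsKDominatingSet k D ∧ (G.induce D).Connected

/-- The connected `k`-domination number (`⊤` if no connected `k`-dominating set exists). -/
noncomputable def SimpleGraph.connectedKDominationNum (G : SimpleGraph V) (k : ℕ) : ℕ∞ :=
  sInf {m | ∃ D : Set V, G.IsConnectedKDominatingSet k D ∧ (D.ncard : ℕ∞) = m}

/-- The domination number. -/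
noncomputable def SimpleGraph.domNum (G : SimpleGraph V) : ℕ∞ :=
  sInf {m | ∃ D : Set V, G.IsKDominatingSet 1 D ∧ (D.ncard : ℕ∞) = m}

/-- Maximum number of connected components of `G - u` over vertices `u`. -/
noncomputable def SimpleGraph.qmax [Fintype V] (G : SimpleGraph V) : ℕ :=
  Finset.univ.sup fun u : V => Nat.card (G.induce ({u}ᶜ : Set V)).ConnectedComponent

/-- `G` is 2-connected. -/
def SimpleGraph.TwoConnectedG [Fintype V] (G : SimpleGraph V) : Prop :=
  3 ≤ Fintype.card V ∧ G.Connected ∧ ∀ v : V, (G.induce ({v}ᶜ : Set V)).Connected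

/-- `B` is (the vertex set of) a block of `G`: a maximal set inducing a connected
subgraph without cut vertices. -/
def SimpleGraph.IsBlockSet (G : SimpleGraph V) (B : Set V) : Prop :=
  (G.induce B).Connected ∧
  (∀ v ∈ B, B = {v} ∨ (G.induce (B \ {v})).Connected) ∧
  ∀ B' : Set V, B ⊆ B' →
    ((G.induce B').Connected ∧ ∀ v ∈ B', B' = {v} ∨ (G.induce (B' \ {v})).Connected) →
    B' = B

/-- The induced subgraph on `B` is a cycle. -/
def SimpleGraph.IsCycleSet (G : SimpleGraph V) (B : Set V) : Prop :=
  (G.induce B).Connected ∧ 3 ≤ B.ncard ∧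
    ∀ v : B, ((G.induce B).neighborSet v).ncard = 2

/-- `G` has no induced subgraph isomorphic to `H`. -/
def IsInducedSubgraphFree (G : SimpleGraph V) (H : SimpleGraph W) : Prop :=
  ¬ ∃ f : W ↪ V, ∀ a b : W, G.Adj (f a) (f b) ↔ H.Adj a b

/-! Three vertices of `W` with the same color code cannot lie in a common rainbow tree: in the
tree each of them is adjacent to `u₁` or `u₂`, two of them to the same `uᵢ`, and those two edges
have the same color. Hence each of the at most `k²` color codes is shared by at most two vertices.
For `t ≥ 1` the graph `K_{2,t}` is connected, and coloring all edges differently makes any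
spanning tree rainbow, so `rx₃(K_{2,t})` is attained and the bound applies to it. -/

namespace SimpleGraph

variable {G : SimpleGraph V}

theorem Connected.rainbowTreeFor (hG : G.Connected) {c : Sym2 V → ℕ} (hc : Set.InjOn c G.edgeSet)
    (x y z : V) : G.RainbowTreeFor c x y z := by
  obtain ⟨T, hle, hT⟩ := hG.exists_isTree_le
  refine ⟨toSubgraph T hle, ?_, trivial, trivial, trivial, hc.mono (Subgraph.edgeSet_subset _)⟩
  exact (Subgraph.spanningCoeEquivCoeOfSpanning _ (toSubgraph.isSpanning T hle)).isTree_iff.mp hT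

theorem Connected.exists_isRainbow3Coloring [Finite V] (hG : G.Connected) :
    ∃ k c, G.IsRainbow3Coloring c k := by
  obtain ⟨k, ⟨e⟩⟩ := Finite.exists_equiv_fin (Sym2 V)
  refine ⟨k, fun s => e s, fun s _ => (e s).isLt, hG.rainbowTreeFor ?_⟩
  exact fun s _ s' _ h => e.injective (Fin.ext h)

theorem exists_isRainbow3Coloring_rx3 (h : ∃ k c, G.IsRainbow3Coloring c k) :
    ∃ c, G.IsRainbow3Coloring c G.rx3 :=
  Nat.sInf_mem h

theorem completeBipartiteGraph_connected {α : Type*} [Nonempty α] [Nonempty W] :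
    (completeBipartiteGraph α W).Connected := by
  obtain ⟨a₀⟩ := ‹Nonempty α›
  obtain ⟨w₀⟩ := ‹Nonempty W›
  have hreach : ∀ w : W, (completeBipartiteGraph α W).Reachable (.inl a₀) (.inr w) :=
    fun w => Adj.reachable (by simp)
  rw [connected_iff_exists_forall_reachable]
  refine ⟨.inl a₀, ?_⟩
  rintro (a | w)
  · exact (hreach w₀).trans (Adj.reachable (by simp))
  · exact hreach w

section Bipartite

variable {α : Type*}

def colorCode (c : Sym2 (α ⊕ W) → ℕ) (w : W) : α → ℕ :=
  fun u => c s(.inl u, .inr w)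

theorem Subgraph.Preconnected.exists_adj_inl {T : (completeBipartiteGraph α W).Subgraph}
    (hT : T.Preconnected) {w : W} {x : α ⊕ W} (hw : .inr w ∈ T.verts) (hx : x ∈ T.verts)
    (hne : x ≠ .inr w) : ∃ u, T.Adj (.inl u) (.inr w) := by
  have : Nontrivial T.verts := ⟨⟨⟨_, hw⟩, ⟨x, hx⟩, fun h => hne (congrArg Subtype.val h).symm⟩⟩
  obtain ⟨y | y, hadj⟩ := hT.exists_adj_of_nontrivial ⟨_, hw⟩
  · exact ⟨y, hadj.symm⟩
  · simpa using T.adj_sub hadj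

variable {k : ℕ} {c : Sym2 (Fin 2 ⊕ W) → ℕ}

theorem IsRainbow3Coloring.card_filter_colorCode_eq_le_two [Fintype W] [DecidableEq W]
    (hc : (completeBipartiteGraph (Fin 2) W).IsRainbow3Coloring c k) (p : Fin 2 → ℕ) :
    #{w | colorCode c w = p} ≤ 2 := by
  by_contra! hlt
  obtain ⟨w₁, hw₁, w₂, hw₂, w₃, hw₃, h₁₂, h₁₃, h₂₃⟩ := two_lt_card.mp hlt
  simp only [mem_filter, mem_univ, true_and] at hw₁ hw₂ hw₃
  obtain ⟨T, hT, hm₁, hm₂, hm₃, hinj⟩ := hc.2 (.inr w₁) (.inr w₂) (.inr w₃)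
  have hpre : T.Preconnected := ⟨hT.connected.preconnected⟩
  obtain ⟨u₁, hu₁⟩ := hpre.exists_adj_inl hm₁ hm₂ (by simpa using h₁₂.symm)
  obtain ⟨u₂, hu₂⟩ := hpre.exists_adj_inl hm₂ hm₁ (by simpa using h₁₂)
  obtain ⟨u₃, hu₃⟩ := hpre.exists_adj_inl hm₃ hm₁ (by simpa using h₁₃)
  have hsame_hub : ∀ {w w' : W} {u : Fin 2}, colorCode c w = p → colorCode c w' = p →
      T.Adj (.inl u) (.inr w) → T.Adj (.inl u) (.inr w') → w = w' := by
    intro w w' u hw hw' ha ha'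
    have hcol : c s(.inl u, .inr w) = c s(.inl u, .inr w') := congrFun (hw.trans hw'.symm) u
    simpa using hinj ha ha' hcol
  have hpigeon : ∀ a b c : Fin 2, a = b ∨ a = c ∨ b = c := by decide
  rcases hpigeon u₁ u₂ u₃ with rfl | rfl | rfl
  · exact h₁₂ (hsame_hub hw₁ hw₂ hu₁ hu₂)
  · exact h₁₃ (hsame_hub hw₁ hw₃ hu₁ hu₃)
  · exact h₂₃ (hsame_hub hw₂ hw₃ hu₂ hu₃)

theorem IsRainbow3Coloring.card_le_two_mul_sq [Fintype W] [DecidableEq W]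
    (hc : (completeBipartiteGraph (Fin 2) W).IsRainbow3Coloring c k) :
    Fintype.card W ≤ 2 * k ^ 2 := by
  have hcodes : ∀ w ∈ (univ : Finset W),
      colorCode c w ∈ Fintype.piFinset fun _ : Fin 2 => range k := by
    intro w _
    simp only [Fintype.mem_piFinset, mem_range]
    exact fun u => hc.1 _ (by simp)
  simpa using card_le_mul_card_image_of_maps_to hcodes 2
    fun p _ => hc.card_filter_colorCode_eq_le_two p

end Bipartite

end SimpleGraph

theorem stmt3 :
    (∀ (t k : ℕ) (c : Sym2 (Fin 2 ⊕ Fin t) → ℕ),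
      (completeBipartiteGraph (Fin 2) (Fin t)).IsRainbow3Coloring c k → t ≤ 2 * k ^ 2) ∧
    Filter.Tendsto (fun t => (completeBipartiteGraph (Fin 2) (Fin t)).rx3)
      Filter.atTop Filter.atTop := by
  have hbound : ∀ (t k : ℕ) (c : Sym2 (Fin 2 ⊕ Fin t) → ℕ),
      (completeBipartiteGraph (Fin 2) (Fin t)).IsRainbow3Coloring c k → t ≤ 2 * k ^ 2 :=
    fun t k c hc => by simpa using hc.card_le_two_mul_sq
  refine ⟨hbound, Filter.tendsto_atTop_atTop.mpr fun b => ⟨2 * b ^ 2 + 1, fun t ht => ?_⟩⟩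
  have : Nonempty (Fin t) := ⟨⟨0, by omega⟩⟩
  obtain ⟨c, hc⟩ := exists_isRainbow3Coloring_rx3
    (completeBipartiteGraph_connected (α := Fin 2) (W := Fin t)).exists_isRainbow3Coloring
  have hle := hbound t _ c hc
  by_contra! hlt
  have := Nat.pow_le_pow_left hlt.le 2
  omega
end

section
/- Let G be a connected graph of order n with minimum degree δ(G) ≥ 2, and let D be a connected dominating set of G. Then there exists a set D' ⊇ D that is a connected 2-dominating set of G with |D'| ≤ n/2 + |D|/2. -/
open SimpleGraph Finset

variable {V : Type*} {W : Type*}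

/-
Let `X` be the set of vertices outside `D` having a neighbour outside `D`. Then `G[X]` has no
isolated vertex, so by Ore's theorem some `A ⊆ X` dominates `X` with `|A| ≤ |X| / 2`. A vertex
outside `D ∪ A` with at most one neighbour in `D` has, as `δ ≥ 2`, a neighbour outside `D`; so it
lies in `X` and gets a second neighbour in `D ∪ A` from `A`. Every vertex of `A` has a neighbour in
`D`, so `D ∪ A` is connected, and `|D ∪ A| ≤ |D| + (n - |D|) / 2`.
-/

namespace SimpleGraph

def Dominates (G : SimpleGraph V) (A B : Set V) : Prop :=
  ∀ b ∈ B, b ∈ A ∨ ∃ a ∈ A, G.Adj b a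

variable {G : SimpleGraph V}

section Ore

variable {A X : Set V}

lemma Dominates.sdiff_singleton (hA : G.Dominates A X) {v : V} (hvX : ∃ y ∈ X, G.Adj v y)
    (hvA : ∀ y ∈ X \ A, ¬ G.Adj v y) : G.Dominates (A \ {v}) X := by
  have mem_of_adj : ∀ y ∈ X, G.Adj v y → y ∈ A := fun y hy hvy =>
    by_contra fun hyA => hvA y ⟨hy, hyA⟩ hvy
  intro b hb
  by_cases hbv : b = v
  · subst hbv
    obtain ⟨y, hy, hby⟩ := hvX
    exact Or.inr ⟨y, ⟨mem_of_adj y hy hby, hby.ne.symm⟩, hby⟩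
  rcases hA b hb with hbA | ⟨a, haA, hba⟩
  · exact Or.inl ⟨hbA, hbv⟩
  by_cases hav : a = v
  · subst hav
    exact Or.inl ⟨mem_of_adj b hb hba.symm, hbv⟩
  · exact Or.inr ⟨a, ⟨haA, hav⟩, hba⟩

/-- Ore's theorem, relative to a vertex set: the complement in `X` of a minimum dominating set
of `X` again dominates `X`. -/
theorem exists_dominates_two_mul_ncard_le (hXfin : X.Finite)
    (hX : ∀ x ∈ X, ∃ y ∈ X, G.Adj x y) :
    ∃ A ⊆ X, G.Dominates A X ∧ 2 * A.ncard ≤ X.ncard := by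
  obtain ⟨A, ⟨hAX, hA⟩, hAmin⟩ := Set.exists_min_image {A | A ⊆ X ∧ G.Dominates A X} Set.ncard
    (hXfin.finite_subsets.subset fun _ h => h.1)
    ⟨X, subset_rfl, fun b hb => Or.inl hb⟩
  refine ⟨A, hAX, hA, ?_⟩
  have hAfin : A.Finite := hXfin.subset hAX
  by_cases hcompl : G.Dominates (X \ A) X
  · have := hAmin _ ⟨Set.sdiff_subset, hcompl⟩
    rw [Set.ncard_sdiff hAX hAfin] at this
    have := Set.ncard_le_ncard hAX hXfin
    omega
  · exfalso
    obtain ⟨v, hvX, hv⟩ : ∃ v ∈ X, ¬ (v ∈ X \ A ∨ ∃ a ∈ X \ A, G.Adj v a) := by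
      simpa [Dominates] using hcompl
    push Not at hv
    have hvA : v ∈ A := by_contra fun hvA => hv.1 ⟨hvX, hvA⟩
    have := hAmin _ ⟨Set.sdiff_subset.trans hAX, hA.sdiff_singleton (hX v hvX) hv.2⟩
    exact (Set.ncard_sdiff_singleton_lt_of_mem hvA hAfin).not_ge this

end Ore

lemma induce_union_connected_of_forall_exists_adj {s t : Set V} (hs : (G.induce s).Connected)
    (ht : ∀ v ∈ t, ∃ u ∈ s, G.Adj u v) : (G.induce (s ∪ t)).Connected := by
  obtain ⟨⟨u, hu⟩⟩ := hs.nonempty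
  refine G.induce_connected_of_patches u (Or.inl hu) fun {v} hv => ?_
  rcases hv with hv | hv
  · exact ⟨s, Set.subset_union_left, hu, hv, hs.preconnected _ _⟩
  · obtain ⟨w, hw, hwv⟩ := ht v hv
    have := G.connected_induce_union hs.preconnected (t := {v}) Preconnected.of_subsingleton
      hw rfl hwv
    exact ⟨s ∪ {v}, Set.union_subset_union_right s (Set.singleton_subset_iff.2 hv),
      Or.inl hu, Or.inr rfl, this.preconnected _ _⟩

lemma IsKDominatingSet.exists_adj_of_notMem {D : Set V} (hD : G.IsKDominatingSet 1 D) {v : V}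
    (hv : v ∉ D) : ∃ d ∈ D, G.Adj v d := by
  obtain ⟨d, hvd, hd⟩ := Set.nonempty_of_ncard_ne_zero (Nat.one_le_iff_ne_zero.1 (hD v hv))
  exact ⟨d, hd, hvd⟩

def nonisolatedOutside (G : SimpleGraph V) (D : Set V) : Set V :=
  {x | x ∉ D ∧ ∃ y ∉ D, G.Adj x y}

lemma exists_adj_nonisolatedOutside {D : Set V} {x : V} (hx : x ∈ G.nonisolatedOutside D) :
    ∃ y ∈ G.nonisolatedOutside D, G.Adj x y := by
  obtain ⟨hxD, y, hyD, hxy⟩ := hx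
  exact ⟨y, ⟨hyD, x, hxD, hxy.symm⟩, hxy⟩

lemma isKDominatingSet_two_union {D A : Set V} (hD : G.IsKDominatingSet 1 D)
    (hdeg : ∀ v, 2 ≤ (G.neighborSet v).ncard) (hA : G.Dominates A (G.nonisolatedOutside D))
    (hAD : Disjoint A D) : G.IsKDominatingSet 2 (D ∪ A) := by
  intro v hv
  rw [Set.mem_union, not_or] at hv
  obtain ⟨hvD, hvA⟩ := hv
  have hfin : (G.neighborSet v ∩ (D ∪ A)).Finite :=
    (Set.finite_of_ncard_pos (two_pos.trans_le (hdeg v))).inter_of_left _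
  by_cases hmany : 2 ≤ (G.neighborSet v ∩ D).ncard
  · exact hmany.trans (Set.ncard_le_ncard
      (Set.inter_subset_inter_right _ Set.subset_union_left) hfin)
  have hout : ∃ y ∉ D, G.Adj v y := by
    by_contra! hN
    have hND : G.neighborSet v ⊆ D := fun y hy => by_contra fun hyD => hN y hyD hy
    exact hmany (by rw [Set.inter_eq_left.2 hND]; exact hdeg v)
  obtain _ | ⟨a, haA, hva⟩ := hA v ⟨hvD, hout⟩
  · contradiction
  obtain ⟨d, hdD, hvd⟩ := hD.exists_adj_of_notMem hvD
  have hda : d ≠ a := fun h => hAD.notMem_of_mem_left haA (h ▸ hdD)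
  calc 2 = ({d, a} : Set V).ncard := (Set.ncard_pair hda).symm
    _ ≤ _ := Set.ncard_le_ncard (Set.pair_subset (s := G.neighborSet v ∩ (D ∪ A))
      ⟨hvd, .inl hdD⟩ ⟨hva, .inr haA⟩) hfin

end SimpleGraph

theorem stmt5_general {V : Type*} [Fintype V] (G : SimpleGraph V) [DecidableRel G.Adj]
    (hδ : 2 ≤ G.minDegree) (D : Set V)
    (hD : G.IsConnectedKDominatingSet 1 D) :
    ∃ D' : Set V, D ⊆ D' ∧ G.IsConnectedKDominatingSet 2 D' ∧
      2 * D'.ncard ≤ Fintype.card V + D.ncard := by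
  obtain ⟨hdom, hconn⟩ := hD
  set X := G.nonisolatedOutside D
  obtain ⟨A, hAX, hA, hAcard⟩ :=
    exists_dominates_two_mul_ncard_le X.toFinite fun _ => exists_adj_nonisolatedOutside
  have hAD : Disjoint A D := Set.disjoint_left.2 fun a ha => (hAX ha).1
  have hdeg (v : V) : 2 ≤ (G.neighborSet v).ncard := by
    rw [Set.ncard_eq_toFinset_card', Set.toFinset_card, card_neighborSet_eq_degree]
    exact hδ.trans (G.minDegree_le_degree v)
  refine ⟨D ∪ A, Set.subset_union_left, ⟨isKDominatingSet_two_union hdom hdeg hA hAD,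
    induce_union_connected_of_forall_exists_adj hconn fun a ha => ?_⟩, ?_⟩
  · obtain ⟨d, hd, had⟩ := hdom.exists_adj_of_notMem (hAX ha).1
    exact ⟨d, hd, had.symm⟩
  · have hX : X.ncard ≤ Dᶜ.ncard := Set.ncard_le_ncard fun x hx => hx.1
    rw [Set.ncard_union_eq hAD.symm, ← Nat.card_eq_fintype_card, ← Set.ncard_add_ncard_compl D]
    omega

theorem stmt5 {V : Type*} [Fintype V] (G : SimpleGraph V) [DecidableRel G.Adj]
    (h : G.Connected) (hδ : 2 ≤ G.minDegree) (D : Set V)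
    (hD : G.IsConnectedKDominatingSet 1 D) :
    ∃ D' : Set V, D ⊆ D' ∧ G.IsConnectedKDominatingSet 2 D' ∧
      2 * D'.ncard ≤ Fintype.card V + D.ncard :=
  stmt5_general G hδ D hD
end

section
/- Let G be a connected graph on n vertices with minimum degree δ ≥ 2 and let k be an integer with 1 ≤ k ≤ δ. Then the connected k-domination number satisfies γₖᶜ(G) ≤ n − q_max(G)·(δ − k + 1), where q_max(G) is the maximum number of connected components of G − u over all vertices u. -/
open SimpleGraph Finset

variable {V : Type*} {W : Type*}

/-! Pick `u` maximizing the number `q` of components of `G - u`. Every vertex of a component `C`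
has all its neighbours in `C ∪ {u}`, so `|C| ≥ δ`, and `C ∪ {u}` is connected because `G` is.
Repeatedly deleting a leaf other than `u` of a spanning tree removes `m = δ - k + 1` vertices from
each `C` while keeping `C ∪ {u}` connected. The set `D` of the remaining vertices is connected
through `u` and has `n - q m` elements, and a removed vertex loses at most `m - 1` of its at least
`δ` neighbours, so it keeps at least `k` of them in `D`. -/

namespace SimpleGraph

variable {G : SimpleGraph V}

theorem ncard_neighborSet_eq_degree [Fintype V] [DecidableRel G.Adj] (v : V) :
    (G.neighborSet v).ncard = G.degree v := by
  rw [Set.ncard_eq_toFinset_card']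
  rfl

theorem Connected.induce_image_val {S : Set V} {T : Set S}
    (h : ((G.induce S).induce T).Connected) : (G.induce (Subtype.val '' T)).Connected :=
  h.map ⟨fun x => ⟨x.1.1, x.1, x.2, rfl⟩, id⟩ (by rintro ⟨_, x, hx, rfl⟩; exact ⟨⟨x, hx⟩, rfl⟩)

theorem Connected.exists_ne_connected_induce_compl_singleton [Finite V] [Nontrivial V]
    (hG : G.Connected) (u : V) : ∃ v ≠ u, (G.induce {v}ᶜ).Connected := by
  classical
  have := Fintype.ofFinite V
  obtain ⟨T, hTG, hT⟩ := hG.exists_isTree_le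
  have leaf (v : V) (hv : T.degree v = 1) : (G.induce {v}ᶜ).Connected :=
    (hT.connected.induce_compl_singleton_of_degree_eq_one hv).mono (by tauto)
  obtain ⟨a, b, hab, ha, hb⟩ := hT.exists_ne_and_degree_eq_one
  by_cases hau : a = u
  · exact ⟨b, hau ▸ hab.symm, leaf b hb⟩
  · exact ⟨a, hau, leaf a ha⟩

theorem exists_ne_connected_induce_sdiff_singleton {S : Set V} (hS : (G.induce S).Connected)
    {u : V} (hu : u ∈ S) (hcard : 1 < S.ncard) :
    ∃ v ∈ S, v ≠ u ∧ (G.induce (S \ {v})).Connected := by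
  have : Finite S := Set.finite_of_ncard_pos (by omega)
  have : Nontrivial S := (Set.one_lt_ncard_iff_nontrivial.1 hcard).coe_sort
  obtain ⟨v, hvu, hv⟩ := hS.exists_ne_connected_induce_compl_singleton ⟨u, hu⟩
  refine ⟨v, v.2, fun h => hvu (Subtype.ext h), ?_⟩
  have himage : Subtype.val '' ({v}ᶜ : Set S) = S \ {v.1} := by
    ext x; simp
  exact himage ▸ hv.induce_image_val

theorem exists_connected_induce_sdiff {S : Set V} (hS : (G.induce S).Connected) {u : V}
    (hu : u ∈ S) {m : ℕ} (hm : m < S.ncard) :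
    ∃ R ⊆ S \ {u}, R.ncard = m ∧ (G.induce (S \ R)).Connected := by
  induction m generalizing S with
  | zero => exact ⟨∅, Set.empty_subset _, Set.ncard_empty _, by rwa [Set.sdiff_empty]⟩
  | succ m ih =>
    have hfin : S.Finite := Set.finite_of_ncard_pos (by omega)
    obtain ⟨v, hvS, hvu, hv⟩ := exists_ne_connected_induce_sdiff_singleton hS hu (by omega)
    obtain ⟨R, hRS, hRcard, hR⟩ := ih hv ⟨hu, hvu.symm⟩
      (by rw [Set.ncard_sdiff_singleton_of_mem hvS]; omega)
    have hvR : v ∉ R := fun h => (hRS h).1.2 rfl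
    refine ⟨insert v R, Set.insert_subset ⟨hvS, hvu⟩ fun x hx => ⟨(hRS hx).1.1, (hRS hx).2⟩,
      ?_, ?_⟩
    · rw [Set.ncard_insert_of_notMem hvR (hfin.subset fun x hx => (hRS hx).1.1), hRcard]
    · rwa [Set.insert_eq, ← Set.sdiff_sdiff]

namespace ConnectedComponent

variable {s : Set V} {c c' : (G.induce s).ConnectedComponent} {x y : V}

theorem eq_of_mem_image_val_supp (hc : x ∈ Subtype.val '' c.supp)
    (hc' : x ∈ Subtype.val '' c'.supp) : c = c' := by
  obtain ⟨x, hx, rfl⟩ := hc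
  obtain ⟨x', hx', hxx'⟩ := hc'
  rw [← (mem_supp_iff _ _).1 hx, ← (mem_supp_iff _ _).1 hx', Subtype.val_injective hxx']

theorem mem_image_val_supp_of_adj (hx : x ∈ Subtype.val '' c.supp) (hxy : G.Adj x y)
    (hy : y ∈ s) : y ∈ Subtype.val '' c.supp := by
  obtain ⟨x, hx, rfl⟩ := hx
  refine ⟨⟨y, hy⟩, ?_, rfl⟩
  rw [mem_supp_iff, ← (mem_supp_iff _ _).1 hx]
  exact (connectedComponentMk_eq_of_adj (G := G.induce s) (v := x) (w := ⟨y, hy⟩) hxy).symm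

theorem image_val_supp_subset : Subtype.val '' c.supp ⊆ s := by
  rintro _ ⟨x, -, rfl⟩
  exact x.2

theorem connected_induce_image_val_supp : (G.induce (Subtype.val '' c.supp)).Connected :=
  c.connected_toSimpleGraph.induce_image_val

theorem exists_adj_of_connected (hG : G.Connected) (hs : sᶜ.Nonempty) :
    ∃ x ∈ Subtype.val '' c.supp, ∃ y ∉ s, G.Adj x y := by
  obtain ⟨x, hx⟩ := c.exists_rep
  obtain ⟨y, hy⟩ := hs
  obtain ⟨d, -, hd, hd'⟩ := (hG.preconnected x y).some.exists_boundary_dart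
    (Subtype.val '' c.supp) ⟨x, hx, rfl⟩ fun h => hy (image_val_supp_subset h)
  exact ⟨d.fst, hd, d.snd, fun h => hd' (mem_image_val_supp_of_adj hd d.adj h), d.adj⟩

section DeleteVertex

variable {u : V} (c : (G.induce {u}ᶜ).ConnectedComponent)

theorem notMem_image_val_supp : u ∉ Subtype.val '' c.supp :=
  fun h => image_val_supp_subset h rfl

theorem connected_induce_insert_image_val_supp (hG : G.Connected) :
    (G.induce (insert u (Subtype.val '' c.supp))).Connected := by
  obtain ⟨x, hx, y, hy, hxy⟩ := c.exists_adj_of_connected hG ⟨u, by simp⟩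
  rw [Set.notMem_compl_iff, Set.mem_singleton_iff] at hy
  subst hy
  rw [Set.insert_eq]
  exact connected_induce_union (fun a b => Subsingleton.elim a b ▸ Reachable.refl a)
    c.connected_induce_image_val_supp.preconnected rfl hx hxy.symm

theorem minDegree_le_ncard_image_val_supp [Fintype V] [DecidableRel G.Adj] :
    G.minDegree ≤ (Subtype.val '' c.supp).ncard := by
  obtain ⟨x, hx⟩ := c.exists_rep
  have hxc : x.1 ∈ Subtype.val '' c.supp := ⟨x, hx, rfl⟩
  have hsub : insert x.1 (G.neighborSet x) ⊆ insert u (Subtype.val '' c.supp) := by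
    rintro y (rfl | hy)
    · exact Or.inr hxc
    · by_cases hyu : y = u
      · exact Or.inl hyu
      · exact Or.inr (mem_image_val_supp_of_adj hxc hy hyu)
  have := Set.ncard_le_ncard hsub
  rw [Set.ncard_insert_of_notMem (G.notMem_neighborSet_self (a := x.1)),
    ncard_neighborSet_eq_degree] at this
  have := Set.ncard_insert_le u (Subtype.val '' c.supp)
  have := G.minDegree_le_degree x
  omega

end DeleteVertex

end ConnectedComponent

section RemoveFromComponents

variable {u : V} {R : (G.induce {u}ᶜ).ConnectedComponent → Set V}

theorem isKDominatingSet_compl_iUnion [Fintype V] [DecidableRel G.Adj]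
    (hR : ∀ c, R c ⊆ Subtype.val '' c.supp) {k : ℕ}
    (hk : ∀ c, k + (R c).ncard ≤ G.minDegree + 1) : G.IsKDominatingSet k (⋃ c, R c)ᶜ := by
  intro v hv
  obtain ⟨c, hvc⟩ := Set.mem_iUnion.1 (not_not.1 hv)
  have hsub : G.neighborSet v ⊆ (G.neighborSet v ∩ (⋃ c, R c)ᶜ) ∪ (R c \ {v}) := by
    intro y hy
    by_cases hyR : y ∈ ⋃ c, R c
    · obtain ⟨c', hyc'⟩ := Set.mem_iUnion.1 hyR
      have hyu : y ∈ ({u}ᶜ : Set V) := ConnectedComponent.image_val_supp_subset (hR c' hyc')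
      have hc : c' = c := ConnectedComponent.eq_of_mem_image_val_supp (hR c' hyc')
        (ConnectedComponent.mem_image_val_supp_of_adj (hR c hvc) hy hyu)
      exact Or.inr ⟨hc ▸ hyc', (G.ne_of_adj hy).symm⟩
    · exact Or.inl ⟨hy, hyR⟩
  have h₁ := (Set.ncard_le_ncard hsub).trans (Set.ncard_union_le _ _)
  rw [ncard_neighborSet_eq_degree, Set.ncard_sdiff_singleton_of_mem hvc] at h₁
  have h₂ := G.minDegree_le_degree v
  have h₃ := (Set.ncard_pos (Set.toFinite _)).2 ⟨v, hvc⟩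
  have h₄ := hk c
  omega

theorem connected_induce_compl_iUnion (hR : ∀ c, R c ⊆ Subtype.val '' c.supp)
    (hconn : ∀ c, (G.induce (insert u (Subtype.val '' c.supp) \ R c)).Connected) :
    (G.induce (⋃ c, R c)ᶜ).Connected := by
  have hu (c) : u ∉ R c := fun h => c.notMem_image_val_supp (hR c h)
  refine induce_connected_of_patches u (by simpa using hu) fun {v} hv => ?_
  by_cases hvu : v = u
  · subst hvu
    exact ⟨{v}, by simpa using hv, rfl, rfl, Reachable.refl _⟩
  set c := (G.induce {u}ᶜ).connectedComponentMk ⟨v, hvu⟩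
  refine ⟨insert u (Subtype.val '' c.supp) \ R c, ?_, ⟨.inl rfl, hu c⟩,
    ⟨.inr ⟨_, rfl, rfl⟩, fun h => hv (Set.mem_iUnion.2 ⟨c, h⟩)⟩, (hconn c).preconnected _ _⟩
  rintro y ⟨rfl | hyc, hyR⟩ hy
  · exact hu _ (Set.mem_iUnion.1 hy).choose_spec
  · obtain ⟨c', hyc'⟩ := Set.mem_iUnion.1 hy
    exact hyR (ConnectedComponent.eq_of_mem_image_val_supp (hR c' hyc') hyc ▸ hyc')

theorem ncard_iUnion_of_subset_supp [Finite V] (hR : ∀ c, R c ⊆ Subtype.val '' c.supp)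
    {m : ℕ} (hm : ∀ c, (R c).ncard = m) :
    (⋃ c, R c).ncard = Nat.card (G.induce {u}ᶜ).ConnectedComponent * m := by
  have := Fintype.ofFinite (G.induce {u}ᶜ).ConnectedComponent
  rw [Set.ncard_iUnion_of_finite (fun _ => Set.toFinite _) fun c c' hcc' =>
      Set.disjoint_left.2 fun _ hc hc' =>
        hcc' (ConnectedComponent.eq_of_mem_image_val_supp (hR c hc) (hR c' hc')),
    finsum_congr hm, finsum_eq_sum_of_fintype, Finset.sum_const, Finset.card_univ,
    Nat.card_eq_fintype_card, smul_eq_mul]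

end RemoveFromComponents

theorem exists_isConnectedKDominatingSet_ncard_add_eq [Fintype V] [DecidableRel G.Adj]
    (hG : G.Connected) (u : V) {k : ℕ} (hk1 : 1 ≤ k) (hkδ : k ≤ G.minDegree) :
    ∃ D, G.IsConnectedKDominatingSet k D ∧
      D.ncard + Nat.card (G.induce {u}ᶜ).ConnectedComponent * (G.minDegree - k + 1) =
        Fintype.card V := by
  set m := G.minDegree - k + 1
  have hm (c : (G.induce {u}ᶜ).ConnectedComponent) :
      m < (insert u (Subtype.val '' c.supp)).ncard := by
    rw [Set.ncard_insert_of_notMem c.notMem_image_val_supp]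
    have := c.minDegree_le_ncard_image_val_supp
    omega
  choose R hRsub hRcard hRconn using fun c =>
    exists_connected_induce_sdiff (c.connected_induce_insert_image_val_supp hG)
      (Set.mem_insert u _) (hm c)
  have hR (c) : R c ⊆ Subtype.val '' c.supp := fun x hx =>
    (hRsub c hx).1.resolve_left (hRsub c hx).2
  refine ⟨(⋃ c, R c)ᶜ, ⟨isKDominatingSet_compl_iUnion hR fun c => ?_,
    connected_induce_compl_iUnion hR hRconn⟩, ?_⟩
  · rw [hRcard]
    omega
  · have := Set.ncard_add_ncard_compl (⋃ c, R c)
    rw [ncard_iUnion_of_subset_supp hR hRcard] at this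
    rw [← Nat.card_eq_fintype_card]
    omega

end SimpleGraph

theorem stmt9_general {V : Type*} [Fintype V] (G : SimpleGraph V) [DecidableRel G.Adj]
    (h : G.Connected) (k : ℕ) (hk1 : 1 ≤ k)
    (hkδ : k ≤ G.minDegree) :
    G.connectedKDominationNum k + (G.qmax * (G.minDegree - k + 1) : ℕ) ≤
      (Fintype.card V : ℕ∞) := by
  obtain ⟨u, -, hu⟩ := Finset.exists_mem_eq_sup Finset.univ
    (Finset.univ_nonempty_iff.2 h.nonempty)
    fun u : V => Nat.card (G.induce ({u}ᶜ : Set V)).ConnectedComponent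
  obtain ⟨D, hD, hcard⟩ := exists_isConnectedKDominatingSet_ncard_add_eq h u hk1 hkδ
  calc G.connectedKDominationNum k + ((G.qmax * (G.minDegree - k + 1) : ℕ) : ℕ∞)
      ≤ D.ncard + ((G.qmax * (G.minDegree - k + 1) : ℕ) : ℕ∞) := by
        gcongr
        exact sInf_le ⟨D, hD, rfl⟩
    _ = Fintype.card V := by
        rw [qmax, hu]
        exact_mod_cast hcard

theorem stmt9 {V : Type*} [Fintype V] (G : SimpleGraph V) [DecidableRel G.Adj]
    (h : G.Connected) (hδ : 2 ≤ G.minDegree) (k : ℕ) (hk1 : 1 ≤ k)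
    (hkδ : k ≤ G.minDegree) :
    G.connectedKDominationNum k + (G.qmax * (G.minDegree - k + 1) : ℕ) ≤
      (Fintype.card V : ℕ∞) :=
  stmt9_general G h k hk1 hkδ
end

section
/- The 3-rainbow index of the complete bipartite graph K_{3,3} equals 3. -/
open SimpleGraph Finset

variable {V : Type*} {W : Type*}

/-!
A tree containing three vertices of one side of `K_{3,3}` must also contain a vertex of the
other side, so it has at least four vertices and three edges, which a rainbow tree needs three
colours for. Conversely, any three vertices lie in the closed neighbourhood of a single vertex
`v`, and the star at `v` is rainbow as soon as the colouring is proper; colouring the edge `ij`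
by `i + j mod 3` is such a colouring.
-/

namespace SimpleGraph

variable {G : SimpleGraph V}

/-- Every cycle has a vertex `u ≠ v`; rotated to start at `u`, both cycle-neighbours of `u`
would have to be `v`, contradicting `snd ≠ penultimate`. -/
theorem isAcyclic_of_forall_adj_eq_or_eq (v : V) (h : ∀ ⦃a b⦄, G.Adj a b → a = v ∨ b = v) :
    G.IsAcyclic := by
  have key : ∀ u, u ≠ v → ∀ p : G.Walk u u, ¬ p.IsCycle := fun u hu p hp => by
    have hsnd := (h (p.adj_snd hp.not_nil)).resolve_left hu
    have hpen := (h (p.adj_penultimate hp.not_nil)).resolve_right hu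
    exact hp.snd_ne_penultimate (hsnd.trans hpen.symm)
  classical
  intro w p hp
  by_cases hw : w = v
  · subst hw
    exact key _ (p.adj_snd hp.not_nil).ne' _ (hp.rotate (p.getVert_mem_support 1))
  · exact key w hw p hp

def starSubgraph (G : SimpleGraph V) (v : V) : G.Subgraph where
  verts := insert v (G.neighborSet v)
  Adj a b := G.Adj a b ∧ (a = v ∨ b = v)
  adj_sub h := h.1
  edge_vert := by
    rintro a b ⟨hab, rfl | rfl⟩
    exacts [Set.mem_insert _ _, Set.mem_insert_of_mem _ hab.symm]
  symm := ⟨fun _ _ h => ⟨h.1.symm, h.2.symm⟩⟩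

theorem isTree_coe_starSubgraph (v : V) : (G.starSubgraph v).coe.IsTree := by
  let center : (G.starSubgraph v).verts := ⟨v, Set.mem_insert _ _⟩
  have reach : ∀ a, (G.starSubgraph v).coe.Reachable a center := by
    rintro ⟨a, rfl | ha⟩
    · rfl
    · exact Adj.reachable (show G.Adj a v ∧ _ from ⟨ha.symm, Or.inr rfl⟩)
  refine ⟨@Connected.mk _ _ (fun a b => (reach a).trans (reach b).symm) ⟨center⟩, ?_⟩
  refine isAcyclic_of_forall_adj_eq_or_eq center fun a b hab => ?_
  rcases hab.2 with h | h
  exacts [Or.inl (Subtype.ext h), Or.inr (Subtype.ext h)]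

theorem edgeSet_starSubgraph_subset (v : V) :
    (G.starSubgraph v).edgeSet ⊆ (fun u => s(v, u)) '' G.neighborSet v := by
  rintro ⟨a, b⟩ ⟨hab, rfl | rfl⟩
  exacts [⟨b, hab, rfl⟩, ⟨a, hab.symm, Sym2.eq_swap⟩]

theorem rainbowTreeFor_of_mem_closedNbhd {c : Sym2 V → ℕ} {v x y z : V}
    (hc : Set.InjOn (fun u => c s(v, u)) (G.neighborSet v)) (hx : x ∈ insert v (G.neighborSet v))
    (hy : y ∈ insert v (G.neighborSet v)) (hz : z ∈ insert v (G.neighborSet v)) :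
    G.RainbowTreeFor c x y z :=
  ⟨G.starSubgraph v, isTree_coe_starSubgraph v, hx, hy, hz,
    hc.image_of_comp.mono (edgeSet_starSubgraph_subset v)⟩

theorem ncard_verts_le_of_isTree [Finite V] {c : Sym2 V → ℕ} {k : ℕ} {T : G.Subgraph}
    (hT : T.coe.IsTree) (hc : Set.InjOn c T.edgeSet) (hk : ∀ e ∈ G.edgeSet, c e < k) :
    T.verts.ncard ≤ k + 1 := by
  have hedges : T.coe.edgeSet.ncard = T.edgeSet.ncard := by
    rw [← T.image_coe_edgeSet_coe, Set.ncard_image_of_injective _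
      (Sym2.map.injective Subtype.val_injective)]
  have hcolors : T.edgeSet.ncard ≤ (Set.Iio k).ncard :=
    Set.ncard_le_ncard_of_injOn c (fun e he => hk e (T.edgeSet_subset he)) hc (Set.finite_Iio k)
  have htree := (isTree_iff_connected_and_card.mp hT).2
  rw [Nat.card_coe_set_eq, Nat.card_coe_set_eq, hedges] at htree
  calc T.verts.ncard = T.edgeSet.ncard + 1 := htree.symm
    _ ≤ k + 1 := by simpa using hcolors

/-- The neighbour of a vertex of `s` inside `T` lies outside the independent set `s`. -/
theorem IsIndepSet.ncard_lt_ncard_verts [Finite V] {s : Set V} (hs : G.IsIndepSet s)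
    (hs2 : 1 < s.ncard) {T : G.Subgraph} (hT : T.coe.Connected) (hsT : s ⊆ T.verts) :
    s.ncard < T.verts.ncard := by
  obtain ⟨x, hx, y, hy, hxy⟩ := (Set.one_lt_ncard (s.toFinite)).mp hs2
  have : Nontrivial T.verts := ⟨⟨⟨x, hsT hx⟩, ⟨y, hsT hy⟩, fun h => hxy (congrArg Subtype.val h)⟩⟩
  obtain ⟨w, hxw⟩ := hT.preconnected.exists_adj_of_nontrivial ⟨x, hsT hx⟩
  have hGxw : G.Adj x w := T.adj_sub hxw
  have hws : (w : V) ∉ s := fun hw => hs hx hw hGxw.ne hGxw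
  exact Set.ncard_lt_ncard ⟨hsT, fun h => hws (h w.2)⟩ (Set.toFinite _)

theorem IsRainbow3Coloring.three_le [Finite V] {c : Sym2 V → ℕ} {k : ℕ}
    (hc : G.IsRainbow3Coloring c k) {s : Set V} (hs : G.IsIndepSet s) (hs3 : s.ncard = 3) :
    3 ≤ k := by
  obtain ⟨x, y, z, -, -, -, rfl⟩ := Set.ncard_eq_three.mp hs3
  obtain ⟨T, hT, hx, hy, hz, hinj⟩ := hc.2 x y z
  have hsT : {x, y, z} ⊆ T.verts := by
    rintro u (rfl | rfl | rfl) <;> assumption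
  have := hs.ncard_lt_ncard_verts (by omega) hT.connected hsT
  have := ncard_verts_le_of_isTree hT hinj hc.1
  omega

end SimpleGraph

section CompleteBipartite

variable {α β : Type*}

theorem exists_mem_closedNbhd_completeBipartiteGraph [Nonempty α] [Nonempty β] (x y z : α ⊕ β) :
    ∃ v, {x, y, z} ⊆ insert v ((completeBipartiteGraph α β).neighborSet v) := by
  obtain ⟨a⟩ := ‹Nonempty α›
  obtain ⟨b⟩ := ‹Nonempty β›
  rcases x with x | x <;> rcases y with y | y <;> rcases z with z | z
  exacts [⟨.inr b, by simp [Set.insert_subset_iff]⟩, ⟨.inr z, by simp [Set.insert_subset_iff]⟩,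
    ⟨.inr y, by simp [Set.insert_subset_iff]⟩, ⟨.inl x, by simp [Set.insert_subset_iff]⟩,
    ⟨.inr x, by simp [Set.insert_subset_iff]⟩, ⟨.inl y, by simp [Set.insert_subset_iff]⟩,
    ⟨.inl z, by simp [Set.insert_subset_iff]⟩, ⟨.inl a, by simp [Set.insert_subset_iff]⟩]

theorem isIndepSet_range_inl_completeBipartiteGraph :
    (completeBipartiteGraph α β).IsIndepSet (Set.range Sum.inl) := by
  rintro _ ⟨a, rfl⟩ _ ⟨b, rfl⟩ -
  simp

/-- The Latin-square colouring `ij ↦ i + j` of the edges of `K_{n,n}`. -/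
def addColoring (n : ℕ) : Sym2 (Fin n ⊕ Fin n) → ℕ :=
  Sym2.lift ⟨fun a b => ((Sum.elim id id a + Sum.elim id id b : Fin n) : ℕ),
    fun _ _ => congrArg Fin.val (add_comm _ _)⟩

theorem injOn_addColoring (n : ℕ) (v : Fin n ⊕ Fin n) :
    Set.InjOn (fun u => addColoring n s(v, u))
      ((completeBipartiteGraph (Fin n) (Fin n)).neighborSet v) := by
  rcases v with i | i <;> rintro (j₁ | j₁) h₁ (j₂ | j₂) h₂ heq <;> simp_all [addColoring, Fin.val_inj]

theorem isRainbow3Coloring_addColoring (n : ℕ) [NeZero n] :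
    (completeBipartiteGraph (Fin n) (Fin n)).IsRainbow3Coloring (addColoring n) n := by
  refine ⟨fun e _ => ?_, fun x y z => ?_⟩
  · induction e using Sym2.ind with
    | _ a b => exact Fin.isLt _
  · obtain ⟨v, hv⟩ := exists_mem_closedNbhd_completeBipartiteGraph x y z
    exact rainbowTreeFor_of_mem_closedNbhd (injOn_addColoring n v) (hv (by simp))
      (hv (by simp)) (hv (by simp))

end CompleteBipartite

theorem stmt12 : (completeBipartiteGraph (Fin 3) (Fin 3)).rx3 = 3 := by
  have hcol := isRainbow3Coloring_addColoring 3
  refine le_antisymm (Nat.sInf_le ⟨_, hcol⟩) (le_csInf ⟨3, _, hcol⟩ ?_)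
  rintro k ⟨c, hc⟩
  refine hc.three_le isIndepSet_range_inl_completeBipartiteGraph ?_
  simp [Set.ncard_range_of_injective Sum.inl_injective]
end

section
/- If G is a 2-connected graph on n ≥ 4 vertices, then rx₃(G) ≤ n − 2. -/
open SimpleGraph Finset

variable {V : Type*} {W : Type*}

/-!
A 2-connected graph on at least four vertices has a cycle `C` of length `ℓ ≥ 4`. Write it as a
path `w = p₀, …, pₘ = u` with `m = ℓ - 2 ≥ 2`, closed up by a vertex `v` adjacent to `w` and `u`.
Colour the path with `m` distinct colours, give `vu` the colour of the first path edge and `vw`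
the colour of the last one. Then `C - v`, `C - w`, `C - u` and `u v w` are rainbow paths, and
every triple of vertices of `C` lies on one of them: `C` is 3-rainbow coloured with `ℓ - 2`
colours.

The remaining vertices are attached one at a time by an edge `ab` to the part `S` already
coloured, `b ∉ S`, `a ∈ S`, and `ab` gets a fresh colour. A triple containing `b` is served by the
old rainbow tree of the triple with `b` replaced by `a`, plus the edge `ab`. This costs `n - ℓ`
more colours, `n - 2` in total.
-/

namespace SimpleGraph

variable {G : SimpleGraph V}

lemma Subgraph.isTree_coe_iff [Finite V] {H : G.Subgraph} :
    H.coe.IsTree ↔ H.Connected ∧ H.edgeSet.ncard + 1 = H.verts.ncard := by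
  rw [isTree_iff_connected_and_card, Subgraph.connected_iff', ← H.image_coe_edgeSet_coe,
    Set.ncard_image_of_injective _ (Sym2.map.injective Subtype.val_injective)]
  rfl

lemma Subgraph.isTree_coe_subgraphOfAdj_sup [Finite V] {T : G.Subgraph} (hT : T.coe.IsTree)
    {a b : V} (h : G.Adj b a) (ha : a ∈ T.verts) (hb : b ∉ T.verts) :
    (G.subgraphOfAdj h ⊔ T).coe.IsTree := by
  rw [Subgraph.isTree_coe_iff] at hT ⊢
  refine ⟨Subgraph.connected_sup (Subgraph.subgraphOfAdj_connected h).preconnected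
    hT.1.preconnected ⟨a, by simp [ha]⟩, ?_⟩
  have hbT : s(b, a) ∉ T.edgeSet := fun he => hb (T.edge_vert he)
  rw [Subgraph.edgeSet_sup, edgeSet_subgraphOfAdj, Set.singleton_union, Subgraph.verts_sup,
    subgraphOfAdj_verts, Set.insert_union, Set.singleton_union, Set.insert_eq_of_mem ha,
    Set.ncard_insert_of_notMem hbT, Set.ncard_insert_of_notMem hb, hT.2]

lemma Walk.IsPath.isTree_coe_toSubgraph [Finite V] {u v : V} {p : G.Walk u v} (hp : p.IsPath) :
    p.toSubgraph.coe.IsTree := by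
  induction p with
  | nil => exact IsTree.coe_singletonSubgraph G _
  | cons h q ih =>
    rw [Walk.cons_isPath_iff] at hp
    exact Subgraph.isTree_coe_subgraphOfAdj_sup (ih hp.1) h q.start_mem_verts_toSubgraph
      (by rw [Walk.mem_verts_toSubgraph]; exact hp.2)

lemma Walk.IsPath.ncard_support {u v : V} {p : G.Walk u v} (hp : p.IsPath) :
    {x | x ∈ p.support}.ncard = p.length + 1 := by
  classical
  rw [← List.coe_toFinset, Set.ncard_coe_finset, List.toFinset_card_of_nodup hp.support_nodup,
    Walk.length_support]

lemma exists_adj_mem_notMem (hG : G.Preconnected) {S : Set V} {x y : V} (hx : x ∈ S)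
    (hy : y ∉ S) : ∃ a ∈ S, ∃ b ∉ S, G.Adj a b := by
  obtain ⟨p⟩ := hG x y
  obtain ⟨d, -, hd, hd'⟩ := p.exists_boundary_dart S hx hy
  exact ⟨d.fst, hd, d.snd, hd', d.adj⟩

-- A cycle of length at least four, cut open at the vertex `v`.
def HasLongCycle (G : SimpleGraph V) : Prop :=
  ∃ (v w u : V) (P : G.Walk w u), P.IsPath ∧ 2 ≤ P.length ∧ v ∉ P.support ∧ G.Adj v w ∧
    G.Adj v u

lemma hasLongCycle_of_not_adj {v w u : V} (hG : (G.induce {v}ᶜ).Connected) (hvw : G.Adj v w)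
    (hvu : G.Adj v u) (hwu : w ≠ u) (hnadj : ¬ G.Adj w u) : G.HasLongCycle := by
  obtain ⟨p, hp⟩ := (hG.preconnected ⟨w, hvw.ne'⟩ ⟨u, hvu.ne'⟩).exists_isPath
  set P : G.Walk w u := p.map (Embedding.induce {v}ᶜ).toHom
  refine ⟨v, w, u, P, hp.map Subtype.val_injective, ?_, fun hv => ?_, hvw, hvu⟩
  · have h0 : P.length ≠ 0 := fun h => hwu (Walk.eq_of_length_eq_zero h)
    have h1 : P.length ≠ 1 := fun h => hnadj (Walk.adj_of_length_eq_one h)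
    omega
  · obtain ⟨x, -, hx⟩ := List.mem_map.mp (p.support_map _ ▸ hv)
    exact x.2 hx

lemma hasLongCycle_of_square {a t b v : V} (hat : G.Adj a t) (htb : G.Adj t b) (hbv : G.Adj b v)
    (hva : G.Adj v a) (hab : a ≠ b) (htv : t ≠ v) : G.HasLongCycle :=
  ⟨a, t, v, .cons htb (.cons hbv .nil), by simp [htb.ne, hbv.ne, htv], by simp,
    by simp [hat.ne, hab, hva.ne'], hat, hva.symm⟩

lemma hasLongCycle_of_triangle (hG : ∀ v, (G.induce {v}ᶜ).Connected) {a v b t : V}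
    (hav : G.Adj a v) (hab : G.Adj a b) (hvb : G.Adj v b) (hat : G.Adj a t) (htv : t ≠ v)
    (htb : t ≠ b) : G.HasLongCycle := by
  by_cases htb' : G.Adj t b
  · by_cases htv' : G.Adj t v
    · exact hasLongCycle_of_square hat htb' hvb.symm hav.symm hab.ne htv
    · exact hasLongCycle_of_not_adj (hG a) hat hav htv htv'
  · exact hasLongCycle_of_not_adj (hG a) hat hab htb htb'

lemma hasLongCycle [Fintype V] (hG : G.Connected) (hcut : ∀ v, (G.induce {v}ᶜ).Connected)
    (hV : 4 ≤ Fintype.card V) : G.HasLongCycle := by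
  classical
  have hout : ∀ a v b : V, ∃ t, t ≠ a ∧ t ≠ v ∧ t ≠ b := fun a v b => by
    obtain ⟨t, -, ht⟩ := Finset.exists_mem_notMem_of_card_lt_card
      ((Finset.card_le_three (a := a) (b := v) (c := b)).trans_lt
        (by rw [Finset.card_univ]; omega))
    exact ⟨t, by simpa [not_or] using ht⟩
  -- Find a vertex `a` with two neighbours `v, b`. If they are adjacent, some vertex outside the
  -- triangle `avb` is adjacent to it, and `hasLongCycle_of_triangle` applies.
  obtain ⟨a⟩ : Nonempty V := hG.nonempty
  obtain ⟨t, hta, -, -⟩ := hout a a a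
  obtain ⟨v, hav⟩ := (hG.preconnected a t).nonempty_neighborSet_left hta.symm
  replace hav : G.Adj a v := hav
  obtain ⟨t, hta, htv, -⟩ := hout a v v
  obtain ⟨⟨b, hbv⟩, hab⟩ := ((hcut v).preconnected ⟨a, hav.ne⟩ ⟨t, htv⟩).nonempty_neighborSet_left
    (Subtype.coe_ne_coe.mp hta.symm)
  replace hab : G.Adj a b := hab
  replace hbv : b ≠ v := hbv
  by_cases hvb : G.Adj v b
  swap
  · exact hasLongCycle_of_not_adj (hcut a) hav hab hbv.symm hvb
  obtain ⟨t, hta, htv, htb⟩ := hout a v b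
  obtain ⟨s, hs, t', ht', hst'⟩ := exists_adj_mem_notMem hG.preconnected (S := {a, v, b})
    (Set.mem_insert a _) (y := t) (by simp [hta, htv, htb])
  simp only [Set.mem_insert_iff, Set.mem_singleton_iff, not_or] at hs ht'
  rcases hs with rfl | rfl | rfl
  · exact hasLongCycle_of_triangle hcut hav hab hvb hst' ht'.2.1 ht'.2.2
  · exact hasLongCycle_of_triangle hcut hav.symm hvb hab hst' ht'.1 ht'.2.2
  · exact hasLongCycle_of_triangle hcut hab.symm hvb.symm hav hst' ht'.1 ht'.2.1

def RainbowTreeIn (G : SimpleGraph V) (c : Sym2 V → ℕ) (S A : Set V) : Prop :=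
  ∃ T : G.Subgraph, T.verts ⊆ S ∧ T.coe.IsTree ∧ A ⊆ T.verts ∧ Set.InjOn c T.edgeSet

def IsRainbow3ColoringOn (G : SimpleGraph V) (c : Sym2 V → ℕ) (k : ℕ) (S : Set V) : Prop :=
  (∀ e ∈ G.edgeSet, c e < k) ∧ ∀ x ∈ S, ∀ y ∈ S, ∀ z ∈ S, G.RainbowTreeIn c S {x, y, z}

def HasRainbowPathOn (G : SimpleGraph V) (c : Sym2 V → ℕ) (s : Set V) : Prop :=
  ∃ (a b : V) (p : G.Walk a b), p.IsPath ∧ (p.edges.map c).Nodup ∧ {t | t ∈ p.support} = s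

variable {c : Sym2 V → ℕ} {k : ℕ} {S A : Set V}

lemma RainbowTreeIn.mono {A' : Set V} (h : G.RainbowTreeIn c S A) (hA : A' ⊆ A) :
    G.RainbowTreeIn c S A' :=
  let ⟨T, hTS, hT, hAT, hinj⟩ := h
  ⟨T, hTS, hT, hA.trans hAT, hinj⟩

lemma HasRainbowPathOn.rainbowTreeIn [Finite V] {s : Set V} (h : G.HasRainbowPathOn c s)
    (hs : s ⊆ S) (hA : A ⊆ s) : G.RainbowTreeIn c S A := by
  obtain ⟨a, b, p, hp, hc, rfl⟩ := h
  refine ⟨p.toSubgraph, by rwa [Walk.verts_toSubgraph], hp.isTree_coe_toSubgraph,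
    by rwa [Walk.verts_toSubgraph], ?_⟩
  rw [Walk.edgeSet_toSubgraph]
  exact fun e₁ he₁ e₂ he₂ => List.inj_on_of_nodup_map hc he₁ he₂

lemma forall_rainbowTreeIn_of_hasRainbowPathOn [Finite V] {u v w : V} (huv : u ≠ v)
    (huw : u ≠ w) (hvw : v ≠ w) (huvw : {u, v, w} ⊆ S)
    (hpath : ∀ r ∈ ({u, v, w} : Set V), G.HasRainbowPathOn c (S \ {r}))
    (htri : G.HasRainbowPathOn c {u, v, w}) :
    ∀ x ∈ S, ∀ y ∈ S, ∀ z ∈ S, G.RainbowTreeIn c S {x, y, z} := by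
  intro x hx y hy z hz
  by_cases h : {u, v, w} ⊆ ({x, y, z} : Set V)
  · refine htri.rainbowTreeIn huvw (Set.eq_of_subset_of_ncard_le h ?_ (Set.toFinite _)).ge
    rw [Set.ncard_eq_three.mpr ⟨u, v, w, huv, huw, hvw, rfl⟩]
    exact (Set.ncard_insert_le _ _).trans
      (Nat.succ_le_succ ((Set.ncard_insert_le _ _).trans (by simp)))
  · obtain ⟨r, hr, hrxyz⟩ := Set.not_subset.mp h
    exact (hpath r hr).rainbowTreeIn Set.sdiff_subset
      (Set.subset_sdiff_singleton (by simp [Set.insert_subset_iff, hx, hy, hz]) hrxyz)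

lemma Walk.IsTrail.exists_rainbow_coloring {a b : V} {p : G.Walk a b} (hp : p.IsTrail)
    (hlen : 0 < p.length) {e₁ e₂ f₁ f₂ : Sym2 V} (he₁ : e₁ ∈ p.edges) (he₂ : e₂ ∈ p.edges)
    (hf₁ : f₁ ∉ p.edges) (hf₂ : f₂ ∉ p.edges) (hf : f₁ ≠ f₂) :
    ∃ c : Sym2 V → ℕ, (∀ e, c e < p.length) ∧ (p.edges.map c).Nodup ∧ c f₁ = c e₁ ∧
      c f₂ = c e₂ := by
  classical
  set c₀ : Sym2 V → ℕ := fun e => p.edges.idxOf e % p.length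
  have hc : ∀ e ∈ p.edges, (if e = f₁ then c₀ e₁ else if e = f₂ then c₀ e₂ else c₀ e) =
      p.edges.idxOf e := fun e he => by
    rw [if_neg (ne_of_mem_of_not_mem he hf₁), if_neg (ne_of_mem_of_not_mem he hf₂)]
    exact Nat.mod_eq_of_lt (p.length_edges ▸ List.idxOf_lt_length_of_mem he)
  refine ⟨fun e => if e = f₁ then c₀ e₁ else if e = f₂ then c₀ e₂ else c₀ e, fun e => ?_,
    List.Nodup.map_on (fun x hx y hy hxy => ?_) hp.edges_nodup, ?_, ?_⟩
  · dsimp only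
    split_ifs <;> exact Nat.mod_lt _ hlen
  · rwa [hc x hx, hc y hy, List.idxOf_inj hx] at hxy
  · simp [ne_of_mem_of_not_mem he₁ hf₁, ne_of_mem_of_not_mem he₁ hf₂]
  · simp [hf.symm, ne_of_mem_of_not_mem he₂ hf₁, ne_of_mem_of_not_mem he₂ hf₂]

-- Removing `w` from the cycle `v, w, w', …, u, v` leaves the path `v, u, …, w'`.
lemma hasRainbowPathOn_insert_diff_start {v w w' u : V} {h : G.Adj w w'} {P : G.Walk w' u}
    (hP : (Walk.cons h P).IsPath) (hv : v ∉ (Walk.cons h P).support) (hvu : G.Adj v u)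
    (hc : ((Walk.cons h P).edges.map c).Nodup) (hcv : c s(v, u) = c s(w, w')) :
    G.HasRainbowPathOn c (insert v {t | t ∈ (Walk.cons h P).support} \ {w}) := by
  rw [Walk.support_cons, List.mem_cons, not_or] at hv
  have hwP : w ∉ P.support := ((Walk.cons_isPath_iff _ _).mp hP).2
  refine ⟨v, w', Walk.cons hvu P.reverse,
    (Walk.cons_isPath_iff _ _).mpr ⟨hP.of_cons.reverse, by simpa using hv.2⟩, ?_, ?_⟩
  · simp only [Walk.edges_cons, Walk.edges_reverse, List.map_cons, List.map_reverse,
      List.nodup_cons, List.mem_reverse, List.nodup_reverse, hcv] at hc ⊢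
    exact hc
  · ext t
    simp only [Walk.support_cons, Walk.support_reverse, List.mem_cons, List.mem_reverse,
      Set.mem_ofPred_eq, Set.mem_sdiff, Set.mem_insert_iff, Set.mem_singleton_iff]
    grind

lemma isRainbow3ColoringOn_of_cycle [Finite V] {v w u : V} {P : G.Walk w u} (hP : P.IsPath)
    (hlen : 2 ≤ P.length) (hv : v ∉ P.support) (hvw : G.Adj v w) (hvu : G.Adj v u) :
    ∃ c, G.IsRainbow3ColoringOn c P.length (insert v {x | x ∈ P.support}) := by
  have hwu : w ≠ u := by
    rintro rfl
    simp [Walk.length_eq_zero_iff.mpr (Walk.isPath_iff_nil.mp hP)] at hlen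
  obtain ⟨w', h₁, P₁, rfl⟩ := P.exists_eq_cons_of_ne hwu
  obtain ⟨u', h₂, P₂, hP₂⟩ := (Walk.cons h₁ P₁).reverse.exists_eq_cons_of_ne hwu.symm
  set P := Walk.cons h₁ P₁
  have hww' : s(w, w') ∈ P.edges := by simp [P]
  have huu' : s(u, u') ∈ P.edges := by simpa using (by simp [hP₂] : s(u, u') ∈ P.reverse.edges)
  have hfirst_ne_last : s(w, w') ≠ s(u, u') := by
    intro heq
    rcases Sym2.eq_iff.mp heq with ⟨h, -⟩ | ⟨rfl, rfl⟩
    · exact hwu h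
    · simp [P, Walk.length_eq_zero_iff.mpr (Walk.isPath_iff_nil.mp hP.of_cons)] at hlen
  have hvP : ∀ x, s(v, x) ∉ P.edges := fun x he => hv (P.fst_mem_support_of_mem_edges he)
  obtain ⟨c, hbound, hrain, hcu, hcw⟩ := hP.isTrail.exists_rainbow_coloring (by omega) hww' huu'
    (hvP u) (hvP w) (by simp [hwu.symm, hvw.ne])
  refine ⟨c, fun e _ => hbound e, forall_rainbowTreeIn_of_hasRainbowPathOn hvu.ne' hwu.symm
    hvw.ne (by simp [Set.insert_subset_iff]) ?_ ?_⟩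
  · rintro r (rfl | rfl | rfl)
    · have := hasRainbowPathOn_insert_diff_start (hP₂ ▸ hP.reverse) (hP₂ ▸ by simpa using hv) hvw
        (hP₂ ▸ by simpa using hrain) hcw
      simpa [← hP₂] using this
    · refine ⟨w, u, P, hP, hrain, ?_⟩
      ext t
      simp only [Set.mem_ofPred_eq, Set.mem_sdiff, Set.mem_insert_iff, Set.mem_singleton_iff]
      grind
    · exact hasRainbowPathOn_insert_diff_start hP hv hvu hrain hcu
  · refine ⟨u, w, Walk.cons hvu.symm (Walk.cons hvw Walk.nil), ?_, ?_, ?_⟩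
    · simp [hvu.ne', hvw.ne, hwu.symm]
    · simpa [Sym2.eq_swap, hcu, hcw] using
        fun h => hfirst_ne_last (List.inj_on_of_nodup_map hrain hww' huu' h)
    · ext t
      simp

lemma RainbowTreeIn.update_insert [DecidableEq V] (h : G.RainbowTreeIn c S A) {a b : V}
    (hb : b ∉ S) (m : ℕ) : G.RainbowTreeIn (Function.update c s(b, a) m) (insert b S) A := by
  obtain ⟨T, hTS, hT, hAT, hinj⟩ := h
  refine ⟨T, hTS.trans (Set.subset_insert b S), hT, hAT, hinj.congr fun e he => ?_⟩
  rw [Function.update_of_ne]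
  rintro rfl
  exact hb (hTS (T.edge_vert he))

lemma RainbowTreeIn.insert_pendant [Finite V] [DecidableEq V] (h : G.RainbowTreeIn c S A)
    (hc : ∀ e ∈ G.edgeSet, c e < k) {a b : V} (hab : G.Adj b a) (ha : a ∈ A) (hb : b ∉ S) :
    G.RainbowTreeIn (Function.update c s(b, a) k) (insert b S) (insert b A) := by
  obtain ⟨T, hTS, hT, hAT, hinj⟩ := h
  have hbT : b ∉ T.verts := fun h => hb (hTS h)
  have hbaT : s(b, a) ∉ T.edgeSet := fun he => hbT (T.edge_vert he)
  have hcT : Set.EqOn c (Function.update c s(b, a) k) T.edgeSet := fun e he =>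
    (Function.update_of_ne (ne_of_mem_of_not_mem he hbaT) _ _).symm
  refine ⟨G.subgraphOfAdj hab ⊔ T, ?_, Subgraph.isTree_coe_subgraphOfAdj_sup hT hab (hAT ha) hbT,
    ?_, ?_⟩
  · rw [Subgraph.verts_sup, subgraphOfAdj_verts, Set.insert_union, Set.singleton_union,
      Set.insert_eq_of_mem (hAT ha)]
    exact Set.insert_subset_insert hTS
  · rw [Subgraph.verts_sup, subgraphOfAdj_verts, Set.insert_union]
    exact Set.insert_subset_insert (hAT.trans Set.subset_union_right)
  · rw [Subgraph.edgeSet_sup, edgeSet_subgraphOfAdj, Set.singleton_union, Set.injOn_insert hbaT]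
    refine ⟨hinj.congr hcT, ?_⟩
    rintro ⟨e, he, hek⟩
    rw [← hcT he, Function.update_self] at hek
    exact (hc e (T.edgeSet_subset he)).ne hek

theorem IsRainbow3ColoringOn.exists_insert [Finite V] (hc : G.IsRainbow3ColoringOn c k S)
    {a b : V} (h : G.Adj b a) (ha : a ∈ S) (hb : b ∉ S) :
    ∃ c', G.IsRainbow3ColoringOn c' (k + 1) (insert b S) := by
  classical
  refine ⟨Function.update c s(b, a) k, fun e he => ?_, fun x hx y hy z hz => ?_⟩
  · rw [Function.update_apply]
    split_ifs
    · exact k.lt_succ_self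
    · exact (hc.1 e he).trans k.lt_succ_self
  set π : V → V := fun w => if w = b then a else w
  have hπ : ∀ w ∈ insert b S, π w ∈ S := by
    rintro w (rfl | hw)
    · simpa [π]
    · simpa [π, show w ≠ b by rintro rfl; exact hb hw]
  have hT := hc.2 _ (hπ x hx) _ (hπ y hy) _ (hπ z hz)
  by_cases hbxyz : b ∈ ({x, y, z} : Set V)
  · refine (hT.insert_pendant hc.1 h ?_ hb).mono fun t ht => ?_
    · rcases hbxyz with rfl | rfl | rfl <;> simp [π]
    · by_cases htb : t = b
      · exact Or.inl htb
      · refine Set.mem_insert_of_mem b ?_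
        rcases ht with rfl | rfl | rfl <;> simp [π, htb]
  · simp only [Set.mem_insert_iff, Set.mem_singleton_iff, not_or] at hbxyz
    simpa [π, Ne.symm hbxyz.1, Ne.symm hbxyz.2.1, Ne.symm hbxyz.2.2] using hT.update_insert hb k

theorem IsRainbow3ColoringOn.exists_univ [Finite V] (hG : G.Preconnected)
    (hc : G.IsRainbow3ColoringOn c k S) (hS : S.Nonempty) :
    ∃ c', G.IsRainbow3ColoringOn c' (k + Sᶜ.ncard) Set.univ := by
  induction h : Sᶜ.ncard generalizing S c k with
  | zero =>
    rw [Set.ncard_eq_zero, Set.compl_empty_iff] at h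
    exact ⟨c, h ▸ hc⟩
  | succ n ih =>
    obtain ⟨y, hy⟩ : Sᶜ.Nonempty := Set.nonempty_of_ncard_ne_zero (by omega)
    obtain ⟨x, hx⟩ := hS
    obtain ⟨a, ha, b, hb, hab⟩ := exists_adj_mem_notMem hG hx hy
    obtain ⟨c', hc'⟩ := hc.exists_insert hab.symm ha hb
    have hcard := Set.ncard_add_ncard_compl (insert b S)
    rw [Set.ncard_insert_of_notMem hb, ← Set.ncard_add_ncard_compl S, h] at hcard
    obtain ⟨c'', hc''⟩ := ih hc' ⟨b, Set.mem_insert b S⟩ (by omega)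
    exact ⟨c'', by rwa [add_right_comm, add_assoc] at hc''⟩

lemma rx3_le_of_isRainbow3ColoringOn_univ (hc : G.IsRainbow3ColoringOn c k Set.univ) :
    G.rx3 ≤ k := by
  refine Nat.sInf_le ⟨c, hc.1, fun x y z => ?_⟩
  obtain ⟨T, -, hT, hxyz, hinj⟩ := hc.2 x trivial y trivial z trivial
  exact ⟨T, hT, hxyz (by simp), hxyz (by simp), hxyz (by simp), hinj⟩

end SimpleGraph

theorem stmt14 {V : Type*} [Fintype V] (G : SimpleGraph V) (h2 : G.TwoConnectedG)
    (hn : 4 ≤ Fintype.card V) :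
    G.rx3 ≤ Fintype.card V - 2 := by
  obtain ⟨-, hG, hcut⟩ := h2
  obtain ⟨v, w, u, P, hP, hlen, hv, hvw, hvu⟩ := hasLongCycle hG hcut hn
  obtain ⟨c, hc⟩ := isRainbow3ColoringOn_of_cycle hP hlen hv hvw hvu
  obtain ⟨c', hc'⟩ := hc.exists_univ hG.preconnected ⟨v, Set.mem_insert v _⟩
  have hcard := Set.ncard_add_ncard_compl (insert v {x | x ∈ P.support})
  rw [Set.ncard_insert_of_notMem (s := {x | x ∈ P.support}) hv, hP.ncard_support,
    Nat.card_eq_fintype_card] at hcard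
  exact (rx3_le_of_isRainbow3ColoringOn_univ hc').trans (by omega)
end

section
/- Every connected (P₅, C₅)-free graph is a perfect connected-dominant graph: for each connected induced subgraph X of G, the domination number of X equals its connected domination number, γ(X) = γᶜ(X). -/
open SimpleGraph Finset

variable {V : Type*} {W : Type*}

/-!
Take a minimum dominating set `D` of `G` whose induced subgraph has as few components as
possible, and suppose `G[D]` is disconnected. Let `u, v ∈ D` be a closest pair of vertices in
different components of `G[D]`. A shortest `u`–`v` path is induced, so P₅-freeness forces
`dist u v ∈ {2, 3}`. On a path `u x v`, forbidding induced P₅ and C₅ shows that `x` can take the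
place of `u` or of `v` in `D`; on a path `u x y v`, forbidding induced P₅ shows that `x, y` can take
the place of `u, v`. Either exchange keeps `D` dominating and of the same size but merges two
components, a contradiction.
-/

open SimpleGraph

namespace IsInducedSubgraphFree

variable {G : SimpleGraph V} {H : SimpleGraph W}

theorem induce (h : IsInducedSubgraphFree G H) (S : Set V) :
    IsInducedSubgraphFree (G.induce S) H :=
  fun ⟨f, hf⟩ => h ⟨f.trans (Function.Embedding.subtype _), hf⟩

-- Such an `f` is injective: `f a = f b` forces `a` and `b` to have the same neighbours.
theorem false_of_forall_adj_iff (h : IsInducedSubgraphFree G H)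
    (hH : ∀ a b, (∀ c, H.Adj a c ↔ H.Adj b c) → a = b) (f : W → V)
    (hf : ∀ a b, G.Adj (f a) (f b) ↔ H.Adj a b) : False :=
  h ⟨⟨f, fun a b hab => hH a b fun c => by rw [← hf, ← hf, hab]⟩, hf⟩

theorem false_of_induced_path (h : IsInducedSubgraphFree G (pathGraph 5))
    {v₀ v₁ v₂ v₃ v₄ : V}
    (h₀₁ : G.Adj v₀ v₁) (h₁₂ : G.Adj v₁ v₂) (h₂₃ : G.Adj v₂ v₃) (h₃₄ : G.Adj v₃ v₄)
    (h₀₂ : ¬G.Adj v₀ v₂) (h₀₃ : ¬G.Adj v₀ v₃) (h₀₄ : ¬G.Adj v₀ v₄)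
    (h₁₃ : ¬G.Adj v₁ v₃) (h₁₄ : ¬G.Adj v₁ v₄) (h₂₄ : ¬G.Adj v₂ v₄) : False := by
  refine h.false_of_forall_adj_iff (by simp only [pathGraph_adj]; decide)
    ![v₀, v₁, v₂, v₃, v₄] fun a b => ?_
  fin_cases a <;> fin_cases b <;> simp [pathGraph_adj, G.adj_comm, *]

theorem false_of_induced_cycle (h : IsInducedSubgraphFree G (cycleGraph 5))
    {v₀ v₁ v₂ v₃ v₄ : V}
    (h₀₁ : G.Adj v₀ v₁) (h₁₂ : G.Adj v₁ v₂) (h₂₃ : G.Adj v₂ v₃) (h₃₄ : G.Adj v₃ v₄)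
    (h₄₀ : G.Adj v₄ v₀)
    (h₀₂ : ¬G.Adj v₀ v₂) (h₀₃ : ¬G.Adj v₀ v₃)
    (h₁₃ : ¬G.Adj v₁ v₃) (h₁₄ : ¬G.Adj v₁ v₄) (h₂₄ : ¬G.Adj v₂ v₄) : False := by
  refine h.false_of_forall_adj_iff (by decide) ![v₀, v₁, v₂, v₃, v₄] fun a b => ?_
  fin_cases a <;> fin_cases b <;> simp [cycleGraph_adj, G.adj_comm, h₄₀.symm, *] <;> decide

end IsInducedSubgraphFree

namespace SimpleGraph

variable {G : SimpleGraph V}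

theorem Walk.not_adj_getVert_of_length_eq_dist {u v : V} (p : G.Walk u v)
    (hp : p.length = G.dist u v) {i j : ℕ} (hij : i + 1 < j) (hj : j ≤ p.length) :
    ¬G.Adj (p.getVert i) (p.getVert j) := fun hadj => by
  have := G.dist_le ((p.take i).append (.cons hadj (p.drop j)))
  simp only [Walk.length_append, Walk.length_cons, Walk.take_length, Walk.drop_length] at this
  omega

def ReachableIn (G : SimpleGraph V) (D : Set V) (p q : V) : Prop :=
  ∃ (hp : p ∈ D) (hq : q ∈ D), (G.induce D).Reachable ⟨p, hp⟩ ⟨q, hq⟩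

namespace ReachableIn

variable {D : Set V} {p q r : V}

theorem refl (hp : p ∈ D) : G.ReachableIn D p p := ⟨hp, hp, .rfl⟩

theorem symm : G.ReachableIn D p q → G.ReachableIn D q p
  | ⟨hp, hq, h⟩ => ⟨hq, hp, h.symm⟩

theorem trans : G.ReachableIn D p q → G.ReachableIn D q r → G.ReachableIn D p r
  | ⟨hp, _, h⟩, ⟨_, hr, h'⟩ => ⟨hp, hr, h.trans h'⟩

theorem of_adj (hp : p ∈ D) (hq : q ∈ D) (h : G.Adj p q) : G.ReachableIn D p q :=
  ⟨hp, hq, Adj.reachable (G := G.induce D) h⟩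

theorem not_adj (hpq : G.ReachableIn D p q) (hpr : ¬G.ReachableIn D p r) (hr : r ∈ D) :
    ¬G.Adj q r :=
  fun h => hpr (hpq.trans (of_adj hpq.2.1 hr h))

end ReachableIn

theorem not_adj_of_not_reachableIn {D : Set V} {p q : V} (hp : p ∈ D) (hq : q ∈ D)
    (h : ¬G.ReachableIn D p q) : ¬G.Adj p q :=
  (ReachableIn.refl hp).not_adj h hq

theorem card_connectedComponent_induce_image_lt [Finite V] {D : Set V} (φ : V → V)
    (hφ : ∀ a ∈ D, ∀ b ∈ D, G.Adj a b → G.Adj (φ a) (φ b)) {u v : V} (hu : u ∈ D)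
    (hv : v ∈ D) (huv : ¬G.ReachableIn D u v) (hφuv : G.Adj (φ u) (φ v)) :
    Nat.card (G.induce (φ '' D)).ConnectedComponent <
      Nat.card (G.induce D).ConnectedComponent := by
  let F : G.induce D →g G.induce (φ '' D) :=
    ⟨fun a => ⟨φ a, Set.mem_image_of_mem φ a.2⟩, fun {a b} hab => hφ a a.2 b b.2 hab⟩
  have hF : Function.Surjective (ConnectedComponent.map F) := by
    refine ConnectedComponent.ind ?_
    rintro ⟨_, a, ha, rfl⟩
    exact ⟨(G.induce D).connectedComponentMk ⟨a, ha⟩, rfl⟩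
  refine lt_of_not_ge fun hle => huv ⟨hu, hv, ConnectedComponent.eq.mp ?_⟩
  apply (hF.bijective_of_nat_card_le hle).injective
  simp only [ConnectedComponent.map_mk]
  exact ConnectedComponent.eq.mpr (Adj.reachable (G := G.induce (φ '' D)) hφuv)

theorem isKDominatingSet_one_iff [Finite V] {D : Set V} :
    G.IsKDominatingSet 1 D ↔ ∀ v ∉ D, ∃ u ∈ D, G.Adj v u := by
  refine forall₂_congr fun v _ => ?_
  rw [Nat.one_le_iff_ne_zero, ← Nat.pos_iff_ne_zero, Set.ncard_pos]
  exact ⟨fun ⟨u, hvu, hu⟩ => ⟨u, hu, hvu⟩, fun ⟨u, hu, hvu⟩ => ⟨u, hvu, hu⟩⟩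

theorem IsKDominatingSet.nonempty [Finite V] [Nonempty V] {D : Set V}
    (hD : G.IsKDominatingSet 1 D) : D.Nonempty := by
  obtain ⟨w⟩ := ‹Nonempty V›
  by_cases hw : w ∈ D
  · exact ⟨w, hw⟩
  · obtain ⟨d, hd, -⟩ := isKDominatingSet_one_iff.mp hD w hw
    exact ⟨d, hd⟩

theorem isKDominatingSet_one_image [Finite V] {D : Set V} {φ : V → V}
    (hmove : ∀ a ∈ D, φ a ≠ a → G.Adj a (φ a))
    (hpriv : ∀ w ∉ D, w ∉ φ '' D → (∀ d ∈ D, G.Adj w d → φ d ≠ d) → ∃ d ∈ D, G.Adj w (φ d)) :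
    G.IsKDominatingSet 1 (φ '' D) := by
  rw [isKDominatingSet_one_iff]
  intro w hw
  by_cases hwD : w ∈ D
  · exact ⟨φ w, Set.mem_image_of_mem φ hwD, hmove w hwD fun h => hw ⟨w, hwD, h⟩⟩
  by_cases hfix : ∃ d ∈ D, G.Adj w d ∧ φ d = d
  · obtain ⟨d, hd, hwd, hφd⟩ := hfix
    exact ⟨d, ⟨d, hd, hφd⟩, hwd⟩
  push Not at hfix
  obtain ⟨d, hd, hwd⟩ := hpriv w hwD hw hfix
  exact ⟨φ d, Set.mem_image_of_mem φ hd, hwd⟩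

def ExistsDominatingFewerComponents (G : SimpleGraph V) (D : Set V) : Prop :=
  ∃ D' : Set V, G.IsKDominatingSet 1 D' ∧ D'.ncard = D.ncard ∧
    Nat.card (G.induce D').ConnectedComponent < Nat.card (G.induce D).ConnectedComponent

theorem existsDominatingFewerComponents_of_exchange [Finite V] {D : Set V} (φ : V → V)
    (hinj : Set.InjOn φ D)
    (hedge : ∀ a ∈ D, ∀ b ∈ D, G.Adj a b → G.Adj (φ a) (φ b))
    (hmove : ∀ a ∈ D, φ a ≠ a → G.Adj a (φ a))
    (hpriv : ∀ w ∉ D, w ∉ φ '' D → (∀ d ∈ D, G.Adj w d → φ d ≠ d) → ∃ d ∈ D, G.Adj w (φ d))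
    {u v : V} (hu : u ∈ D) (hv : v ∈ D) (huv : ¬G.ReachableIn D u v)
    (hφuv : G.Adj (φ u) (φ v)) : G.ExistsDominatingFewerComponents D :=
  ⟨φ '' D, isKDominatingSet_one_image hmove hpriv, hinj.ncard_image,
    card_connectedComponent_induce_image_lt φ hedge hu hv huv hφuv⟩

def IsPrivateNeighbor (G : SimpleGraph V) (D : Set V) (v w : V) : Prop :=
  w ∉ D ∧ ∀ d ∈ D, G.Adj w d ↔ d = v

-- What `insert x (D \ {v})` needs to stay dominating and keep the edges of `G[D]` at `v`.
def CanReplace (G : SimpleGraph V) (D : Set V) (v x : V) : Prop :=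
  (∀ b ∈ D, G.Adj v b → G.Adj x b) ∧ ∀ w, G.IsPrivateNeighbor D v w → G.Adj x w

section DistanceTwo

variable {D : Set V} {u v x : V}

theorem adj_of_not_adj_neighbor (hP5 : IsInducedSubgraphFree G (pathGraph 5))
    (hu : u ∈ D) (hv : v ∈ D) (huv : ¬G.ReachableIn D u v) (hux : G.Adj u x)
    (hxv : G.Adj x v) {a : V} (ha : a ∈ D) (hua : G.Adj u a) (hxa : ¬G.Adj x a)
    {b : V} (hb : b ∈ D) (hvb : G.Adj v b) : G.Adj x b := by
  by_contra hxb
  have hua' := ReachableIn.of_adj hu ha hua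
  have hub : ¬G.ReachableIn D u b := fun h => huv (h.trans (.of_adj hb hv hvb.symm))
  exact hP5.false_of_induced_path hua.symm hux hxv hvb (fun h => hxa h.symm)
    (hua'.not_adj huv hv) (hua'.not_adj hub hb) (not_adj_of_not_reachableIn hu hv huv)
    (not_adj_of_not_reachableIn hu hb hub) hxb

theorem adj_privateNeighbor_of_not_adj_neighbor (hP5 : IsInducedSubgraphFree G (pathGraph 5))
    (hu : u ∈ D) (hv : v ∈ D) (huv : ¬G.ReachableIn D u v) (hux : G.Adj u x)
    (hxv : G.Adj x v) {a : V} (ha : a ∈ D) (hua : G.Adj u a) (hxa : ¬G.Adj x a)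
    {w : V} (hw : G.IsPrivateNeighbor D v w) : G.Adj x w := by
  by_contra hxw
  have hua' := ReachableIn.of_adj hu ha hua
  have hnuv := not_adj_of_not_reachableIn hu hv huv
  have hne : u ≠ v := fun h => huv (h ▸ .refl hu)
  exact hP5.false_of_induced_path ((hw.2 v hv).mpr rfl) hxv.symm hux.symm hua
    (fun h => hxw h.symm) (fun h => hne ((hw.2 u hu).mp h))
    (fun h => hnuv ((hw.2 a ha).mp h ▸ hua)) (fun h => hnuv h.symm)
    (fun h => hua'.not_adj huv hv h.symm) hxa

theorem adj_privateNeighbor_of_not_adj_privateNeighbor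
    (hP5 : IsInducedSubgraphFree G (pathGraph 5)) (hC5 : IsInducedSubgraphFree G (cycleGraph 5))
    (hu : u ∈ D) (hv : v ∈ D) (huv : ¬G.ReachableIn D u v) (hux : G.Adj u x)
    (hxv : G.Adj x v) {w : V} (hw : G.IsPrivateNeighbor D u w) (hxw : ¬G.Adj x w)
    {w' : V} (hw' : G.IsPrivateNeighbor D v w') : G.Adj x w' := by
  by_contra hxw'
  have hne : u ≠ v := fun h => huv (h ▸ .refl hu)
  have hwx : ¬G.Adj w x := fun h => hxw h.symm
  have hwv : ¬G.Adj w v := fun h => hne ((hw.2 v hv).mp h).symm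
  have huv' := not_adj_of_not_reachableIn hu hv huv
  have huw' : ¬G.Adj u w' := fun h => hne ((hw'.2 u hu).mp h.symm)
  by_cases hww' : G.Adj w w'
  · exact hC5.false_of_induced_cycle ((hw.2 u hu).mpr rfl) hux hxv ((hw'.2 v hv).mpr rfl).symm
      hww'.symm hwx hwv huv' huw' hxw'
  · exact hP5.false_of_induced_path ((hw.2 u hu).mpr rfl) hux hxv ((hw'.2 v hv).mpr rfl).symm
      hwx hwv hww' huv' huw' hxw'

theorem canReplace_or_canReplace (hP5 : IsInducedSubgraphFree G (pathGraph 5))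
    (hC5 : IsInducedSubgraphFree G (cycleGraph 5)) (hu : u ∈ D) (hv : v ∈ D)
    (huv : ¬G.ReachableIn D u v) (hux : G.Adj u x) (hxv : G.Adj x v) :
    G.CanReplace D u x ∨ G.CanReplace D v x := by
  have hvu : ¬G.ReachableIn D v u := fun h => huv h.symm
  refine or_iff_not_imp_right.mpr fun hvx => ?_
  simp only [CanReplace, not_and_or, not_forall] at hvx
  rcases hvx with ⟨b, hb, hvb, hxb⟩ | ⟨w', hw', hxw'⟩
  · exact ⟨fun a ha hua =>
      adj_of_not_adj_neighbor hP5 hv hu hvu hxv.symm hux.symm hb hvb hxb ha hua,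
      fun w hw => adj_privateNeighbor_of_not_adj_neighbor hP5 hv hu hvu hxv.symm hux.symm
        hb hvb hxb hw⟩
  · exact ⟨fun a ha hua => by_contra fun hxa =>
      hxw' (adj_privateNeighbor_of_not_adj_neighbor hP5 hu hv huv hux hxv ha hua hxa hw'),
      fun w hw => adj_privateNeighbor_of_not_adj_privateNeighbor hP5 hC5 hv hu hvu hxv.symm
        hux.symm hw' hxw' hw⟩

theorem existsDominatingFewerComponents_of_canReplace [Finite V]
    (hD : G.IsKDominatingSet 1 D) (hu : u ∈ D) (hv : v ∈ D) (huv : ¬G.ReachableIn D u v)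
    (hux : G.Adj u x) (hxv : G.Adj x v) (hvx : G.CanReplace D v x) :
    G.ExistsDominatingFewerComponents D := by
  classical
  have hxD : x ∉ D := fun hx => huv ((ReachableIn.of_adj hu hx hux).trans (.of_adj hx hv hxv))
  have hne : u ≠ v := fun h => huv (h ▸ .refl hu)
  refine existsDominatingFewerComponents_of_exchange (fun a => if a = v then x else a)
    ?_ ?_ ?_ ?_ hu hv huv (by simpa [hne] using hux)
  · intro a ha b hb hab
    dsimp only at hab
    split_ifs at hab <;> grind
  · intro a ha b hb hab
    split_ifs with hav hbv hbv
    · exact absurd (hav ▸ hbv ▸ hab) G.irrefl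
    · exact hvx.1 b hb (hav ▸ hab)
    · exact (hvx.1 a ha (hbv ▸ hab.symm)).symm
    · exact hab
  · intro a _ h
    split_ifs at h ⊢ with hav
    · exact hav ▸ hxv.symm
    · exact absurd rfl h
  · intro w hw _ hfix
    obtain ⟨d, hd, hwd⟩ := isKDominatingSet_one_iff.mp hD w hw
    have hpv : ∀ d ∈ D, G.Adj w d → d = v := fun d hd h => by_contra fun hdv =>
      hfix d hd h (if_neg hdv)
    have hwv : G.Adj w v := hpv d hd hwd ▸ hwd
    exact ⟨v, hv, by simpa using (hvx.2 w ⟨hw, fun d hd => ⟨hpv d hd, fun h => h ▸ hwv⟩⟩).symm⟩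

theorem existsDominatingFewerComponents_of_adj_adj [Finite V]
    (hP5 : IsInducedSubgraphFree G (pathGraph 5)) (hC5 : IsInducedSubgraphFree G (cycleGraph 5))
    (hD : G.IsKDominatingSet 1 D) (hu : u ∈ D) (hv : v ∈ D) (huv : ¬G.ReachableIn D u v)
    (hux : G.Adj u x) (hxv : G.Adj x v) : G.ExistsDominatingFewerComponents D :=
  (canReplace_or_canReplace hP5 hC5 hu hv huv hux hxv).elim
    (existsDominatingFewerComponents_of_canReplace hD hv hu (fun h => huv h.symm) hxv.symm
      hux.symm)
    (existsDominatingFewerComponents_of_canReplace hD hu hv huv hux hxv)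

end DistanceTwo

section DistanceThree

variable {D : Set V} {u v x y : V}

theorem adj_or_adj_of_adj (hP5 : IsInducedSubgraphFree G (pathGraph 5)) (hu : u ∈ D)
    (hv : v ∈ D) (huv : ¬G.ReachableIn D u v) (hux : G.Adj u x) (hxy : G.Adj x y)
    (hyv : G.Adj y v)
    (hsep : ∀ p ∈ D, ∀ q ∈ D, ¬G.ReachableIn D p q → ∀ z, G.Adj p z → ¬G.Adj z q)
    {w : V} (huw : G.Adj u w) : G.Adj x w ∨ G.Adj y w := by
  by_contra! ⟨hxw, hyw⟩
  exact hP5.false_of_induced_path huw.symm hux hxy hyv (fun h => hxw h.symm)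
    (fun h => hyw h.symm) (hsep u hu v hv huv w huw) (fun h => hsep u hu v hv huv y h hyv)
    (not_adj_of_not_reachableIn hu hv huv) (hsep u hu v hv huv x hux)

theorem adj_of_adj_of_mem (hP5 : IsInducedSubgraphFree G (pathGraph 5)) (hu : u ∈ D)
    (hv : v ∈ D) (huv : ¬G.ReachableIn D u v) (hux : G.Adj u x) (hxy : G.Adj x y)
    (hyv : G.Adj y v)
    (hsep : ∀ p ∈ D, ∀ q ∈ D, ¬G.ReachableIn D p q → ∀ z, G.Adj p z → ¬G.Adj z q)
    {a : V} (ha : a ∈ D) (hua : G.Adj u a) : G.Adj x a :=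
  (adj_or_adj_of_adj hP5 hu hv huv hux hxy hyv hsep hua).resolve_right fun hya =>
    hsep a ha v hv (fun h => huv ((ReachableIn.of_adj hu ha hua).trans h)) y hya.symm hyv

theorem existsDominatingFewerComponents_of_adj_adj_adj [Finite V]
    (hP5 : IsInducedSubgraphFree G (pathGraph 5)) (hD : G.IsKDominatingSet 1 D) (hu : u ∈ D)
    (hv : v ∈ D) (huv : ¬G.ReachableIn D u v) (hux : G.Adj u x) (hxy : G.Adj x y)
    (hyv : G.Adj y v)
    (hsep : ∀ p ∈ D, ∀ q ∈ D, ¬G.ReachableIn D p q → ∀ z, G.Adj p z → ¬G.Adj z q) :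
    G.ExistsDominatingFewerComponents D := by
  classical
  have hvu : ¬G.ReachableIn D v u := fun h => huv h.symm
  have hxD : x ∉ D := fun hx => huv ((ReachableIn.of_adj hu hx hux).trans
    (by_contra fun h => hsep x hx v hv h y hxy hyv))
  have hyD : y ∉ D := fun hy => huv ((by_contra fun h => hsep u hu y hy h x hux hxy).trans
    (.of_adj hy hv hyv))
  have hne : u ≠ v := fun h => huv (h ▸ .refl hu)
  have hxy' : x ≠ y := hxy.ne
  have hnuv := not_adj_of_not_reachableIn hu hv huv
  have hxu : ∀ a ∈ D, G.Adj u a → G.Adj x a := fun _ ha =>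
    adj_of_adj_of_mem hP5 hu hv huv hux hxy hyv hsep ha
  have hyv' : ∀ b ∈ D, G.Adj v b → G.Adj y b := fun _ hb =>
    adj_of_adj_of_mem hP5 hv hu hvu hyv.symm hxy.symm hux.symm hsep hb
  refine existsDominatingFewerComponents_of_exchange
    (fun a => if a = u then x else if a = v then y else a) ?_ ?_ ?_ ?_ hu hv huv
    (by simpa [hne.symm] using hxy)
  · intro a ha b hb hab
    dsimp only at hab
    split_ifs at hab <;> grind
  · intro a ha b hb hab
    split_ifs <;> grind [G.adj_comm, G.irrefl]
  · intro a _ h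
    split_ifs at h ⊢ <;> grind [G.adj_comm]
  · intro w hw _ hfix
    obtain ⟨d, hd, hwd⟩ := isKDominatingSet_one_iff.mp hD w hw
    have hxyw : G.Adj x w ∨ G.Adj y w := by
      by_cases hdu : d = u
      · exact adj_or_adj_of_adj hP5 hu hv huv hux hxy hyv hsep (hdu ▸ hwd.symm)
      by_cases hdv : d = v
      · exact (adj_or_adj_of_adj hP5 hv hu hvu hyv.symm hxy.symm hux.symm hsep
          (hdv ▸ hwd.symm)).symm
      exact absurd (by simp [hdu, hdv]) (hfix d hd hwd)
    rcases hxyw with h | h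
    · exact ⟨u, hu, by simpa using h.symm⟩
    · exact ⟨v, hv, by simpa [hne.symm] using h.symm⟩

end DistanceThree

theorem exists_closest_not_reachableIn [Finite V] {D : Set V} (hD : ¬(G.induce D).Connected)
    (hne : D.Nonempty) :
    ∃ u ∈ D, ∃ v ∈ D, ¬G.ReachableIn D u v ∧
      ∀ p ∈ D, ∀ q ∈ D, ¬G.ReachableIn D p q → G.dist u v ≤ G.dist p q := by
  obtain ⟨p, hp, q, hq, hpq⟩ : ∃ p ∈ D, ∃ q ∈ D, ¬G.ReachableIn D p q := by
    by_contra! h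
    exact hD ((connected_iff _).mpr ⟨fun a b => (h a a.2 b b.2).2.2, hne.to_subtype⟩)
  obtain ⟨⟨u, v⟩, ⟨hu, hv, huv⟩, hmin⟩ := Set.exists_min_image
    {pq : V × V | pq.1 ∈ D ∧ pq.2 ∈ D ∧ ¬G.ReachableIn D pq.1 pq.2}
    (fun pq => G.dist pq.1 pq.2) (Set.toFinite _) ⟨(p, q), hp, hq, hpq⟩
  exact ⟨u, hu, v, hv, huv, fun p hp q hq hpq => hmin (p, q) ⟨hp, hq, hpq⟩⟩

theorem existsDominatingFewerComponents [Finite V] (hG : G.Connected)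
    (hP5 : IsInducedSubgraphFree G (pathGraph 5)) (hC5 : IsInducedSubgraphFree G (cycleGraph 5))
    {D : Set V} (hD : G.IsKDominatingSet 1 D) (hDc : ¬(G.induce D).Connected) :
    G.ExistsDominatingFewerComponents D := by
  have := hG.nonempty
  obtain ⟨u, hu, v, hv, huv, hmin⟩ := exists_closest_not_reachableIn hDc hD.nonempty
  obtain ⟨p, hp⟩ := (hG.preconnected u v).exists_walk_length_eq_dist
  have hadj (i : ℕ) (hi : i < p.length) := p.adj_getVert_succ hi
  have hnadj (i j : ℕ) (hij : i + 1 < j) (hj : j ≤ p.length) :=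
    p.not_adj_getVert_of_length_eq_dist hp hij hj
  have h2 : 2 ≤ p.length := by
    have : G.dist u v ≠ 0 := fun h =>
      huv ((hG.preconnected u v).dist_eq_zero_iff.mp h ▸ .refl hu)
    have : G.dist u v ≠ 1 := fun h =>
      not_adj_of_not_reachableIn hu hv huv (dist_eq_one_iff_adj.mp h)
    omega
  have h3 : p.length ≤ 3 := by
    by_contra! h
    exact hP5.false_of_induced_path (hadj 0 (by omega)) (hadj 1 (by omega)) (hadj 2 (by omega))
      (hadj 3 (by omega)) (hnadj 0 2 (by omega) (by omega)) (hnadj 0 3 (by omega) (by omega))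
      (hnadj 0 4 (by omega) (by omega)) (hnadj 1 3 (by omega) (by omega))
      (hnadj 1 4 (by omega) (by omega)) (hnadj 2 4 (by omega) (by omega))
  have hfirst : G.Adj u (p.getVert 1) := by simpa using hadj 0 (by omega)
  obtain hℓ | hℓ : p.length = 2 ∨ p.length = 3 := by omega
  · have hlast : G.Adj (p.getVert 1) v := by simpa [← hℓ] using hadj 1 (by omega)
    exact existsDominatingFewerComponents_of_adj_adj hP5 hC5 hD hu hv huv hfirst hlast
  · have hlast : G.Adj (p.getVert 2) v := by simpa [← hℓ] using hadj 2 (by omega)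
    refine existsDominatingFewerComponents_of_adj_adj_adj hP5 hD hu hv huv hfirst
      (hadj 1 (by omega)) hlast fun a ha b hb hab z haz hzb => ?_
    have hle := G.dist_le (.cons haz (.cons hzb .nil))
    simp only [Walk.length_cons, Walk.length_nil] at hle
    have := hmin a ha b hb hab
    omega

theorem exists_connected_minimum_isKDominatingSet [Finite V] (hG : G.Connected)
    (hP5 : IsInducedSubgraphFree G (pathGraph 5)) (hC5 : IsInducedSubgraphFree G (cycleGraph 5)) :
    ∃ D : Set V, G.IsKDominatingSet 1 D ∧ (G.induce D).Connected ∧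
      ∀ D' : Set V, G.IsKDominatingSet 1 D' → D.ncard ≤ D'.ncard := by
  obtain ⟨D, hD, hmin⟩ := Set.exists_min_image {D : Set V | G.IsKDominatingSet 1 D}
    (fun D => toLex (D.ncard, Nat.card (G.induce D).ConnectedComponent)) (Set.toFinite _)
    ⟨Set.univ, fun v hv => absurd (Set.mem_univ v) hv⟩
  refine ⟨D, hD, by_contra fun hDc => ?_, fun D' hD' =>
    (Prod.Lex.toLex_le_toLex'.mp (hmin D' hD')).1⟩
  obtain ⟨D', hD', hcard, hlt⟩ := existsDominatingFewerComponents hG hP5 hC5 hD hDc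
  exact hlt.not_ge ((Prod.Lex.toLex_le_toLex'.mp (hmin D' hD')).2 hcard.symm)

theorem domNum_eq_connectedKDominationNum_one_of_connected {D : Set V}
    (hD : G.IsKDominatingSet 1 D) (hconn : (G.induce D).Connected)
    (hmin : ∀ D' : Set V, G.IsKDominatingSet 1 D' → D.ncard ≤ D'.ncard) :
    G.domNum = G.connectedKDominationNum 1 := by
  refine le_antisymm (sInf_le_sInf fun m ⟨D', hD', hm⟩ => ⟨D', hD'.1, hm⟩) ?_
  refine sInf_le_of_le ⟨D, ⟨hD, hconn⟩, rfl⟩ (le_sInf ?_)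
  rintro m ⟨D', hD', rfl⟩
  exact_mod_cast hmin D' hD'

theorem domNum_eq_connectedKDominationNum_one [Finite V] (hG : G.Connected)
    (hP5 : IsInducedSubgraphFree G (pathGraph 5)) (hC5 : IsInducedSubgraphFree G (cycleGraph 5)) :
    G.domNum = G.connectedKDominationNum 1 :=
  let ⟨_, hD, hconn, hmin⟩ := exists_connected_minimum_isKDominatingSet hG hP5 hC5
  domNum_eq_connectedKDominationNum_one_of_connected hD hconn hmin

end SimpleGraph

theorem stmt19_general {V : Type*} [Fintype V] (G : SimpleGraph V)
    (hP5 : IsInducedSubgraphFree G (SimpleGraph.pathGraph 5))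
    (hC5 : IsInducedSubgraphFree G (SimpleGraph.cycleGraph 5)) :
    ∀ S : Set V, (G.induce S).Connected →
      (G.induce S).domNum = (G.induce S).connectedKDominationNum 1 :=
  fun S hS => domNum_eq_connectedKDominationNum_one hS (hP5.induce S) (hC5.induce S)

theorem stmt19 {V : Type*} [Fintype V] (G : SimpleGraph V) (h : G.Connected)
    (hP5 : IsInducedSubgraphFree G (SimpleGraph.pathGraph 5))
    (hC5 : IsInducedSubgraphFree G (SimpleGraph.cycleGraph 5)) :
    ∀ S : Set V, (G.induce S).Connected →
      (G.induce S).domNum = (G.induce S).connectedKDominationNum 1 :=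
  stmt19_general G hP5 hC5
end
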